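/- arXiv:2312.08844 — 10 statements merged into one kernel-verified Lean document; each statement's English description precedes it below -/
import Mathlib

section
/- Let p > 3 and c be distinct primes and let q be a prime satisfying condition (1). Then in the quaternion algebra ℍ[ℚ, −p, −q] there exists an element α such that α² = −c·p (as a scalar), α·j = −(j·α), and the ℚ-linear span of {1, α, j, α·j} is the whole algebra. -/
/-!
Put `α = X i + Z k` with `X, Z ∈ ℚ`. Then `α` anticommutes with `j`, `α² = -p (X² + q Z²)`, and
`1, α, j, α j` span the algebra as soon as `X² + q Z² ≠ 0`. So it suffices to write
`c = X² + q Z²` over `ℚ`. Condition (1) makes `c` a square mod `q` and, by quadratic reciprocity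
(`q ≡ 3 mod 4`), `-q` a square mod `c`. Thue's box principle then gives a small nonzero integer
triple `(u, v, w)` with `qc ∣ u² + q v² - c w²`; the size bounds force this value to be `0` or `qc`,
i.e. `u² + q v² = c (w² + q t²)` with `t ∈ {0, 1}`, and multiplicativity of `x² + q y²` turns
this into a rational representation of `c`.
-/

open Quaternion

/-- Condition (1) on the prime `q`: either `c` is odd, `q ≡ 3 (mod 8)`, `(p/q) = −1` and
`(c/q) = 1`; or `c = 2`, `q ≡ 7 (mod 8)` and `(p/q) = −1`. -/
def SatisfiesCond1 (p c q : ℕ) (hq : q.Prime) : Prop :=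
  (Odd c ∧ q % 8 = 3 ∧ @legendreSym q ⟨hq⟩ (p : ℤ) = -1 ∧ @legendreSym q ⟨hq⟩ (c : ℤ) = 1) ∨
  (c = 2 ∧ q % 8 = 7 ∧ @legendreSym q ⟨hq⟩ (p : ℤ) = -1)

namespace QuaternionAlgebra

variable {R : Type*} [CommRing R] {a b : R}

theorem sq_mk_zero_zero (x z : R) :
    (⟨0, x, 0, z⟩ : ℍ[R, a, b]) ^ 2 = ((a * (x ^ 2 - b * z ^ 2) : R) : ℍ[R, a, b]) := by
  ext <;> simp [sq] <;> ring

theorem mk_zero_zero_mul_j (x z : R) :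
    (⟨0, x, 0, z⟩ : ℍ[R, a, b]) * ⟨0, 0, 1, 0⟩ =
      -((⟨0, 0, 1, 0⟩ : ℍ[R, a, b]) * ⟨0, x, 0, z⟩) := by
  ext <;> simp

theorem span_mk_zero_zero_eq_top {K : Type*} [Field K] {a b x z : K}
    (hxz : x ^ 2 - b * z ^ 2 ≠ 0) :
    Submodule.span K ({1, ⟨0, x, 0, z⟩, ⟨0, 0, 1, 0⟩, ⟨0, x, 0, z⟩ * ⟨0, 0, 1, 0⟩} :
      Set ℍ[K, a, b]) = ⊤ := by
  set α : ℍ[K, a, b] := ⟨0, x, 0, z⟩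
  set j : ℍ[K, a, b] := ⟨0, 0, 1, 0⟩
  refine eq_top_iff.2 fun w _ => ?_
  have hw : w = w.re • 1 + ((x * w.imI - b * z * w.imK) / (x ^ 2 - b * z ^ 2)) • α + w.imJ • j
      + ((x * w.imK - z * w.imI) / (x ^ 2 - b * z ^ 2)) • (α * j) := by
    ext <;> simp [α, j] <;> field_simp <;> ring
  rw [hw]
  refine add_mem (add_mem (add_mem ?_ ?_) ?_) ?_ <;>
    exact Submodule.smul_mem _ _ (Submodule.subset_span (by simp))

end QuaternionAlgebra

theorem exists_sq_add_mul_sq_eq_of_mul_eq {K : Type*} [Field K] {q c x y z t : K}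
    (h : x ^ 2 + q * y ^ 2 = c * (z ^ 2 + q * t ^ 2)) (hzt : z ^ 2 + q * t ^ 2 ≠ 0) :
    ∃ X Z : K, X ^ 2 + q * Z ^ 2 = c :=
  ⟨(x * z + q * y * t) / (z ^ 2 + q * t ^ 2), (y * z - x * t) / (z ^ 2 + q * t ^ 2), by
    field_simp
    linear_combination (z ^ 2 + q * t ^ 2) * h⟩

theorem sq_natCast_sub_le_of_le_sqrt {n x y : ℕ} (hx : x ≤ n.sqrt) (hy : y ≤ n.sqrt) :
    ((x : ℤ) - y) ^ 2 ≤ n := by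
  have hn : ((n.sqrt : ℕ) : ℤ) ^ 2 ≤ n := by exact_mod_cast Nat.sqrt_le' n
  nlinarith [sq_le_sq' (a := (x : ℤ) - y) (b := n.sqrt) (by omega) (by omega)]

theorem exists_small_ne_zero_modEq (q c : ℕ) [NeZero q] [NeZero c] (α : ZMod q) (β : ZMod c) :
    ∃ u v w : ℤ, (u ≠ 0 ∨ v ≠ 0 ∨ w ≠ 0) ∧ u ^ 2 ≤ q * c ∧ v ^ 2 ≤ c ∧ w ^ 2 ≤ q ∧
      (u : ZMod q) = α * w ∧ (u : ZMod c) = β * v := by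
  let box := Finset.range ((q * c).sqrt + 1) ×ˢ Finset.range (c.sqrt + 1) ×ˢ
    Finset.range (q.sqrt + 1)
  have hcard : (Finset.univ : Finset (ZMod q × ZMod c)).card < box.card := by
    simp only [box, Finset.card_univ, Fintype.card_prod, ZMod.card, Finset.card_product,
      Finset.card_range]
    refine lt_of_pow_lt_pow_left₀ 2 (by positivity) ?_
    calc (q * c) ^ 2 = (q * c) * (c * q) := by ring
      _ < ((q * c).sqrt + 1) ^ 2 * ((c.sqrt + 1) ^ 2 * (q.sqrt + 1) ^ 2) :=
          Nat.mul_lt_mul_of_lt_of_le (Nat.lt_succ_sqrt' _)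
            (Nat.mul_le_mul (Nat.lt_succ_sqrt' c).le (Nat.lt_succ_sqrt' q).le) (by positivity)
      _ = _ := by ring
  obtain ⟨s, hs, t, ht, hst, hfst⟩ := Finset.exists_ne_map_eq_of_card_lt_of_maps_to hcard
    (f := fun s : ℕ × ℕ × ℕ => (((s.1 : ZMod q) - α * s.2.2), ((s.1 : ZMod c) - β * s.2.1)))
    (fun _ _ => Finset.mem_univ _)
  simp only [box, Finset.mem_product, Finset.mem_range, Nat.lt_succ_iff] at hs ht
  simp only [Prod.mk.injEq] at hfst
  refine ⟨(s.1 : ℤ) - t.1, (s.2.1 : ℤ) - t.2.1, (s.2.2 : ℤ) - t.2.2, ?_,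
    sq_natCast_sub_le_of_le_sqrt hs.1 ht.1 |>.trans_eq (by push_cast; ring),
    sq_natCast_sub_le_of_le_sqrt hs.2.1 ht.2.1, sq_natCast_sub_le_of_le_sqrt hs.2.2 ht.2.2, ?_, ?_⟩
  · contrapose! hst
    ext <;> omega
  · push_cast
    linear_combination hfst.1
  · push_cast
    linear_combination hfst.2

theorem Nat.Prime.sq_lt_of_sq_le {p : ℕ} (hp : p.Prime) {v : ℤ} (hv : v ^ 2 ≤ p) : v ^ 2 < p :=
  hv.lt_of_ne fun h => (Nat.prime_iff_prime_int.1 hp).not_isSquare ⟨v, by rw [← h, sq]⟩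

theorem exists_rat_sq_add_mul_sq_eq {q c : ℕ} (hq : q.Prime) (hc : c.Prime) (hqc : q ≠ c)
    (hc_sq : IsSquare (c : ZMod q)) (hq_sq : IsSquare (-(q : ZMod c))) :
    ∃ X Z : ℚ, X ^ 2 + q * Z ^ 2 = c := by
  have := NeZero.of_pos hq.pos
  have := NeZero.of_pos hc.pos
  obtain ⟨α, hα⟩ := hc_sq
  obtain ⟨β, hβ⟩ := hq_sq
  obtain ⟨u, v, w, hne, hu, hv, hw, huq, huc⟩ := exists_small_ne_zero_modEq q c α β
  have hv := hc.sq_lt_of_sq_le hv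
  have hw := hq.sq_lt_of_sq_le hw
  have hdvd_q : (q : ℤ) ∣ u ^ 2 + q * v ^ 2 - c * w ^ 2 := by
    rw [← ZMod.intCast_zmod_eq_zero_iff_dvd]
    push_cast
    rw [huq, ZMod.natCast_self, hα]
    ring
  have hdvd_c : (c : ℤ) ∣ u ^ 2 + q * v ^ 2 - c * w ^ 2 := by
    rw [← ZMod.intCast_zmod_eq_zero_iff_dvd]
    push_cast
    rw [huc, ZMod.natCast_self]
    linear_combination -v ^ 2 * hβ
  obtain ⟨k, hk⟩ :=
    (Nat.Coprime.isCoprime ((Nat.coprime_primes hq hc).2 hqc)).mul_dvd hdvd_q hdvd_c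
  have hqc_pos : (0 : ℤ) < q * c := mul_pos (mod_cast hq.pos) (mod_cast hc.pos)
  have hk : k = 0 ∨ k = 1 := by
    have hk_lt : k < 2 := lt_of_mul_lt_mul_left (a := (q : ℤ) * c) (by nlinarith) hqc_pos.le
    have hk_gt : -1 < k := lt_of_mul_lt_mul_left (a := (q : ℤ) * c) (by nlinarith) hqc_pos.le
    omega
  rcases hk with rfl | rfl
  · have hw0 : w ≠ 0 := by
      rintro rfl
      have : u = 0 ∧ v = 0 := by constructor <;> nlinarith [sq_nonneg u, sq_nonneg v]
      omega
    exact exists_sq_add_mul_sq_eq_of_mul_eq (x := (u : ℚ)) (y := v) (z := w) (t := 0)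
      (mod_cast (by linarith : u ^ 2 + q * v ^ 2 = c * (w ^ 2 + q * 0 ^ 2))) (by simpa)
  · have hqQ : (0 : ℚ) < q := mod_cast hq.pos
    exact exists_sq_add_mul_sq_eq_of_mul_eq (x := (u : ℚ)) (y := v) (z := w) (t := 1)
      (mod_cast (by linarith : u ^ 2 + q * v ^ 2 = c * (w ^ 2 + q * 1 ^ 2))) (by positivity)

namespace legendreSym

variable {p q : ℕ} [Fact p.Prime] [Fact q.Prime]

theorem isSquare_of_eq_one {a : ℤ} (h : legendreSym p a = 1) : IsSquare (a : ZMod p) :=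
  (eq_one_iff p fun h0 => by simp [(eq_zero_iff p a).2 h0] at h).1 h

theorem neg_natCast_of_mod_four_eq_three (hp : p ≠ 2) (hq : q % 4 = 3) :
    legendreSym p (-q) = legendreSym q p := by
  rw [neg_eq_neg_one_mul, legendreSym.mul, at_neg_one hp]
  rcases Nat.odd_mod_four_iff.1 (Nat.odd_iff.1 ((Fact.out : p.Prime).odd_of_ne_two hp)) with hp4 | hp4
  · rw [ZMod.χ₄_nat_one_mod_four hp4, one_mul, quadratic_reciprocity_one_mod_four hp4 (by omega)]
  · rw [ZMod.χ₄_nat_three_mod_four hp4, quadratic_reciprocity_three_mod_four hp4 hq, neg_one_mul]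

end legendreSym

namespace SatisfiesCond1

variable {p c q : ℕ} {hq : q.Prime}

theorem mod_four (h : SatisfiesCond1 p c q hq) : q % 4 = 3 := by
  rcases h with ⟨-, h8, -⟩ | ⟨-, h8, -⟩ <;> omega

theorem ne (h : SatisfiesCond1 p c q hq) : q ≠ c := by
  have := Fact.mk hq
  rcases h with ⟨-, -, -, hcq⟩ | ⟨rfl, h8, -⟩
  · rintro rfl
    simp [(legendreSym.eq_zero_iff q q).2 (by simp)] at hcq
  · omega

theorem isSquare_natCast (h : SatisfiesCond1 p c q hq) : IsSquare (c : ZMod q) := by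
  have := Fact.mk hq
  have hq2 : q ≠ 2 := by have := h.mod_four; omega
  rcases h with ⟨-, -, -, hcq⟩ | ⟨rfl, h8, -⟩
  · exact_mod_cast legendreSym.isSquare_of_eq_one hcq
  · exact_mod_cast (ZMod.exists_sq_eq_two_iff hq2).2 (Or.inr h8)

theorem isSquare_neg_natCast (hc : c.Prime) (h : SatisfiesCond1 p c q hq) :
    IsSquare (-(q : ZMod c)) := by
  have := Fact.mk hq
  have := Fact.mk hc
  have hq4 := h.mod_four
  rcases h with ⟨hodd, -, -, hcq⟩ | ⟨rfl, -, -⟩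
  · have hc2 : c ≠ 2 := by rintro rfl; norm_num at hodd
    rw [← legendreSym.neg_natCast_of_mod_four_eq_three hc2 hq4] at hcq
    exact_mod_cast legendreSym.isSquare_of_eq_one hcq
  · exact FiniteField.isSquare_of_char_two (ZMod.ringChar_zmod_n 2) _

end SatisfiesCond1

theorem exists_sqrt_neg_cp_general (p c q : ℕ) (hc : c.Prime) (hq : q.Prime)
    (hcond : SatisfiesCond1 p c q hq) :
    ∃ α : ℍ[ℚ, -(p : ℚ), -(q : ℚ)],
      α ^ 2 = ((-((c : ℚ) * (p : ℚ)) : ℚ) : ℍ[ℚ, -(p : ℚ), -(q : ℚ)]) ∧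
      α * (⟨0, 0, 1, 0⟩ : ℍ[ℚ, -(p : ℚ), -(q : ℚ)]) =
        -((⟨0, 0, 1, 0⟩ : ℍ[ℚ, -(p : ℚ), -(q : ℚ)]) * α) ∧
      Submodule.span ℚ
        ({1, α, ⟨0, 0, 1, 0⟩, α * ⟨0, 0, 1, 0⟩} : Set ℍ[ℚ, -(p : ℚ), -(q : ℚ)]) = ⊤ := by
  obtain ⟨X, Z, hXZ⟩ := exists_rat_sq_add_mul_sq_eq hq hc hcond.ne hcond.isSquare_natCast
    (hcond.isSquare_neg_natCast hc)
  have hnorm : X ^ 2 - -(q : ℚ) * Z ^ 2 = c := by rw [← hXZ]; ring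
  refine ⟨⟨0, X, 0, Z⟩, ?_, QuaternionAlgebra.mk_zero_zero_mul_j X Z,
    QuaternionAlgebra.span_mk_zero_zero_eq_top (hnorm ▸ mod_cast hc.ne_zero)⟩
  rw [QuaternionAlgebra.sq_mk_zero_zero, hnorm, neg_mul, mul_comm]

/-- In the quaternion algebra `ℍ[ℚ, −p, −q]` there exists an element `α` with
`α² = −c·p`, anticommuting with `j`, such that `1, α, j, α·j` span the whole algebra. -/
theorem exists_sqrt_neg_cp (p c q : ℕ) (hp : p.Prime) (hp3 : 3 < p) (hc : c.Prime)
    (hpc : p ≠ c) (hq : q.Prime) (hcond : SatisfiesCond1 p c q hq) :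
    ∃ α : ℍ[ℚ, -(p : ℚ), -(q : ℚ)],
      α ^ 2 = ((-((c : ℚ) * (p : ℚ)) : ℚ) : ℍ[ℚ, -(p : ℚ), -(q : ℚ)]) ∧
      α * (⟨0, 0, 1, 0⟩ : ℍ[ℚ, -(p : ℚ), -(q : ℚ)]) =
        -((⟨0, 0, 1, 0⟩ : ℍ[ℚ, -(p : ℚ), -(q : ℚ)]) * α) ∧
      Submodule.span ℚ
        ({1, α, ⟨0, 0, 1, 0⟩, α * ⟨0, 0, 1, 0⟩} : Set ℍ[ℚ, -(p : ℚ), -(q : ℚ)]) = ⊤ :=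
  exists_sqrt_neg_cp_general p c q hc hq hcond
end

section
/- Let c and q be primes such that either (c is odd, q ≡ 3 (mod 8), and the Legendre symbol (c/q) = 1) or (c = 2 and q ≡ 7 (mod 8)). Then there exist rational numbers x and y with y ≠ 0 such that x² + q·y² = c. -/
/-!
Legendre's argument for the ternary form `x² + q y² - c z²`. Square roots `s` of `-q` modulo `c`
and `r` of `c` modulo `q` (quadratic reciprocity, resp. the supplementary law for `2`) make
`c q ∣ x² + q y² - c z²` whenever `x ≡ s y (mod c)` and `x ≡ r z (mod q)`. By pigeonhole such a
nonzero point exists in the box `x² ≤ c q`, `y² ≤ c`, `z² ≤ q`, where the form can then only take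
the values `0` and `c q`, since neither `c` nor `q` is a square. Either way `x² + q y² = c n` with
`n = z²` or `n = z² + q` a nonzero value of the norm form `x² + q y²`, and dividing by `n` gives the
rational point; its `y` is nonzero because `c` is not a rational square.
-/

theorem exists_ne_zero_abs_le_dvd_sub_mul (m n : ℕ) [NeZero m] [NeZero n] (s r : ℤ)
    (A B C : ℕ) (hbox : m * n < (A + 1) * (B + 1) * (C + 1)) :
    ∃ x y z : ℤ, (x, y, z) ≠ 0 ∧ |x| ≤ A ∧ |y| ≤ B ∧ |z| ≤ C ∧
      (m : ℤ) ∣ x - s * y ∧ (n : ℤ) ∣ x - r * z := by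
  let g : Fin (A + 1) × Fin (B + 1) × Fin (C + 1) → ZMod m × ZMod n := fun t =>
    (((t.1 : ℤ) - s * (t.2.1 : ℤ) : ℤ), ((t.1 : ℤ) - r * (t.2.2 : ℤ) : ℤ))
  obtain ⟨t, t', hne, heq⟩ :=
    Fintype.exists_ne_map_eq_of_card_lt g (by simpa [mul_assoc] using hbox)
  obtain ⟨hm, hn⟩ := Prod.ext_iff.mp heq
  rw [ZMod.intCast_eq_intCast_iff_dvd_sub] at hm hn
  refine ⟨(t'.1 : ℤ) - t.1, (t'.2.1 : ℤ) - t.2.1, (t'.2.2 : ℤ) - t.2.2, ?_, ?_, ?_, ?_,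
    by convert hm using 1; ring, by convert hn using 1; ring⟩
  · simp only [ne_eq, Prod.mk_eq_zero, sub_eq_zero, Nat.cast_inj, Fin.val_inj]
    rintro ⟨h1, h2, h3⟩
    exact hne (Prod.ext h1.symm (Prod.ext h2.symm h3.symm))
  all_goals rw [abs_le]; omega

theorem mul_lt_succ_sqrt_mul_succ_sqrt_mul_succ_sqrt (m n : ℕ) :
    m * n < (Nat.sqrt (m * n) + 1) * (Nat.sqrt m + 1) * (Nat.sqrt n + 1) := by
  refine lt_of_pow_lt_pow_left₀ 2 (by positivity) ?_
  calc (m * n) ^ 2 = (m * n) * (m * n) := sq _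
    _ < (Nat.sqrt (m * n) + 1) ^ 2 * ((Nat.sqrt m + 1) ^ 2 * (Nat.sqrt n + 1) ^ 2) :=
      Nat.mul_lt_mul'' (Nat.lt_succ_sqrt' _)
        (Nat.mul_lt_mul'' (Nat.lt_succ_sqrt' m) (Nat.lt_succ_sqrt' n))
    _ = _ := by ring

theorem Int.sq_le_of_abs_le_sqrt {x : ℤ} {N : ℕ} (h : |x| ≤ Nat.sqrt N) : x ^ 2 ≤ N :=
  calc x ^ 2 = |x| ^ 2 := (sq_abs x).symm
    _ ≤ (Nat.sqrt N : ℤ) ^ 2 := pow_le_pow_left₀ (abs_nonneg x) h 2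
    _ ≤ N := mod_cast Nat.sqrt_le' N

section
variable {R : Type*} [CommRing R] {c q s x y z : R}

theorem dvd_sq_add_mul_sq_sub_mul_sq_of_dvd_sub_mul_left (hs : c ∣ s ^ 2 + q)
    (h : c ∣ x - s * y) : c ∣ x ^ 2 + q * y ^ 2 - c * z ^ 2 := by
  rw [show x ^ 2 + q * y ^ 2 - c * z ^ 2
      = (x - s * y) * (x + s * y) + y ^ 2 * (s ^ 2 + q) - c * z ^ 2 by ring]
  exact dvd_sub (dvd_add (dvd_mul_of_dvd_left h _) (dvd_mul_of_dvd_right hs _)) (dvd_mul_right _ _)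

theorem dvd_sq_add_mul_sq_sub_mul_sq_of_dvd_sub_mul_right (hr : q ∣ s ^ 2 - c)
    (h : q ∣ x - s * z) : q ∣ x ^ 2 + q * y ^ 2 - c * z ^ 2 := by
  rw [show x ^ 2 + q * y ^ 2 - c * z ^ 2
      = (x - s * z) * (x + s * z) + z ^ 2 * (s ^ 2 - c) + q * y ^ 2 by ring]
  exact dvd_add (dvd_add (dvd_mul_of_dvd_left h _) (dvd_mul_of_dvd_right hr _)) (dvd_mul_right _ _)
end

theorem sq_add_mul_sq_eq_or_of_dvd {c q x y z : ℤ} (hc : 0 < c) (hq : 0 < q)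
    (hcs : ¬IsSquare c) (hqs : ¬IsSquare q) (hx : x ^ 2 ≤ c * q) (hy : y ^ 2 ≤ c) (hz : z ^ 2 ≤ q)
    (hdvd : c * q ∣ x ^ 2 + q * y ^ 2 - c * z ^ 2) :
    x ^ 2 + q * y ^ 2 = c * z ^ 2 ∨ x ^ 2 + q * y ^ 2 = c * (z ^ 2 + q) := by
  obtain ⟨k, hk⟩ := hdvd
  have hcq : 0 < c * q := mul_pos hc hq
  have hlo : -1 ≤ k := by
    by_contra! h
    nlinarith [sq_nonneg x, sq_nonneg y]
  have hhi : k ≤ 2 := by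
    by_contra! h
    nlinarith [sq_nonneg z]
  interval_cases k
  · exact absurd ⟨z, by nlinarith [sq_nonneg x, sq_nonneg y]⟩ hqs
  · left; linarith
  · right; linarith
  · exact absurd ⟨y, by nlinarith [sq_nonneg z]⟩ hcs

theorem exists_sq_add_mul_sq_eq_of_eq_mul {K : Type*} [Field K] {q c x y z w : K}
    (h : x ^ 2 + q * y ^ 2 = c * (z ^ 2 + q * w ^ 2)) (hn : z ^ 2 + q * w ^ 2 ≠ 0) :
    ∃ a b : K, a ^ 2 + q * b ^ 2 = c := by
  -- Brahmagupta's identity `(x² + q y²)(z² + q w²) = (x z + q y w)² + q (y z - x w)²`.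
  refine ⟨(x * z + q * y * w) / (z ^ 2 + q * w ^ 2), (y * z - x * w) / (z ^ 2 + q * w ^ 2), ?_⟩
  field_simp
  linear_combination (z ^ 2 + q * w ^ 2) * h

theorem exists_sq_add_mul_sq_eq_mul_of_dvd {c q : ℕ} (hc : c.Prime) (hq : q.Prime) (hqc : q ≠ c)
    {s r : ℤ} (hs : (c : ℤ) ∣ s ^ 2 + q) (hr : (q : ℤ) ∣ r ^ 2 - c) :
    ∃ x y z w : ℤ, x ^ 2 + q * y ^ 2 = c * (z ^ 2 + q * w ^ 2) ∧ z ^ 2 + q * w ^ 2 ≠ 0 := by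
  have := NeZero.of_pos hc.pos
  have := NeZero.of_pos hq.pos
  obtain ⟨x, y, z, hxyz, hx, hy, hz, hcx, hqx⟩ := exists_ne_zero_abs_le_dvd_sub_mul c q s r
    _ _ _ (mul_lt_succ_sqrt_mul_succ_sqrt_mul_succ_sqrt c q)
  have hcq : IsCoprime (c : ℤ) q :=
    Nat.isCoprime_iff_coprime.mpr ((Nat.coprime_primes hc hq).mpr hqc.symm)
  have hnsq {p : ℕ} (hp : p.Prime) : ¬IsSquare (p : ℤ) :=
    Int.isSquare_natCast_iff.not.mpr hp.prime.not_isSquare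
  rcases sq_add_mul_sq_eq_or_of_dvd (mod_cast hc.pos) (mod_cast hq.pos) (hnsq hc) (hnsq hq)
    (mod_cast Int.sq_le_of_abs_le_sqrt hx) (Int.sq_le_of_abs_le_sqrt hy)
    (Int.sq_le_of_abs_le_sqrt hz)
    (hcq.mul_dvd (dvd_sq_add_mul_sq_sub_mul_sq_of_dvd_sub_mul_left hs hcx)
      (dvd_sq_add_mul_sq_sub_mul_sq_of_dvd_sub_mul_right hr hqx)) with h | h
  · refine ⟨x, y, z, 0, by simpa using h, ?_⟩
    intro hn
    obtain rfl : z = 0 := by simpa using hn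
    obtain ⟨hx0, hy0⟩ := (add_eq_zero_iff_of_nonneg (sq_nonneg x)
      (by positivity : (0 : ℤ) ≤ q * y ^ 2)).mp (by simpa using h)
    exact hxyz (by simp_all [hq.ne_zero])
  · have : (0 : ℤ) < q := mod_cast hq.pos
    exact ⟨x, y, z, 1, by simpa using h, by positivity⟩

theorem exists_rat_sq_add_mul_sq_eq_of_dvd {c q : ℕ} (hc : c.Prime) (hq : q.Prime) (hqc : q ≠ c)
    {s r : ℤ} (hs : (c : ℤ) ∣ s ^ 2 + q) (hr : (q : ℤ) ∣ r ^ 2 - c) :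
    ∃ a b : ℚ, b ≠ 0 ∧ a ^ 2 + q * b ^ 2 = c := by
  obtain ⟨x, y, z, w, h, hn⟩ := exists_sq_add_mul_sq_eq_mul_of_dvd hc hq hqc hs hr
  obtain ⟨a, b, hab⟩ := exists_sq_add_mul_sq_eq_of_eq_mul (q := (q : ℚ)) (c := c)
    (x := x) (y := y) (z := z) (w := w) (by exact_mod_cast h) (by exact_mod_cast hn)
  refine ⟨a, b, ?_, hab⟩
  rintro rfl
  exact Rat.isSquare_natCast_iff.not.mpr hc.prime.not_isSquare ⟨a, by rw [← hab]; ring⟩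

theorem ZMod.exists_dvd_sq_sub_of_isSquare {n : ℕ} {a : ℤ} (h : IsSquare (a : ZMod n)) :
    ∃ r : ℤ, (n : ℤ) ∣ r ^ 2 - a := by
  obtain ⟨t, ht⟩ := h
  obtain ⟨r, rfl⟩ := ZMod.intCast_surjective t
  exact ⟨r, (ZMod.intCast_eq_intCast_iff_dvd_sub _ _ _).mp (by push_cast; rw [ht, sq])⟩

theorem legendreSym.isSquare_of_eq_one_s1 {p : ℕ} [Fact p.Prime] {a : ℤ}
    (h : legendreSym p a = 1) : IsSquare (a : ZMod p) :=
  (legendreSym.eq_one_iff p fun h0 => by simp [(legendreSym.eq_zero_iff p a).mpr h0] at h).mp h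

theorem legendreSym.neg_eq_one_of_eq_one {p q : ℕ} [Fact p.Prime] [Fact q.Prime] (hp : p ≠ 2)
    (hq : q % 4 = 3) (h : legendreSym q p = 1) : legendreSym p (-q) = 1 := by
  have hp2 : p % 2 = 1 := (Nat.Prime.mod_two_eq_one_iff_ne_two Fact.out).mpr hp
  have hq2 : q ≠ 2 := by omega
  have hrec : legendreSym p q = ZMod.χ₄ p := by
    rw [legendreSym.quadratic_reciprocity' hq2 hp, h, mul_one, pow_mul,
      ZMod.neg_one_pow_div_two_of_three_mod_four hq, ZMod.χ₄_eq_neg_one_pow hp2]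
  rw [legendreSym.at_neg hp, hrec, ← sq, ZMod.χ₄_eq_neg_one_pow hp2, ← pow_mul, pow_mul',
    neg_one_sq, one_pow]

/-- If `c` and `q` are primes with either (`c` odd, `q ≡ 3 (mod 8)`, `(c/q) = 1`) or
(`c = 2`, `q ≡ 7 (mod 8)`), then `x² + q·y² = c` has a rational solution with `y ≠ 0`. -/
theorem exists_rat_sol_x_sq_add_q_y_sq_eq_c (c q : ℕ) (hc : c.Prime) (hq : q.Prime)
    (hcond : (Odd c ∧ q % 8 = 3 ∧ @legendreSym q ⟨hq⟩ (c : ℤ) = 1) ∨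
      (c = 2 ∧ q % 8 = 7)) :
    ∃ x y : ℚ, y ≠ 0 ∧ x ^ 2 + (q : ℚ) * y ^ 2 = (c : ℚ) := by
  have := Fact.mk hq
  have := Fact.mk hc
  rcases hcond with ⟨hodd, hq8, hleg⟩ | ⟨rfl, hq8⟩
  · have hqc : q ≠ c := by
      rintro rfl
      simp [(legendreSym.eq_zero_iff q q).mpr (by simp)] at hleg
    obtain ⟨r, hr⟩ := ZMod.exists_dvd_sq_sub_of_isSquare (legendreSym.isSquare_of_eq_one_s1 hleg)
    obtain ⟨s, hs⟩ := ZMod.exists_dvd_sq_sub_of_isSquare (legendreSym.isSquare_of_eq_one_s1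
      (legendreSym.neg_eq_one_of_eq_one (hodd.ne_two_of_dvd_nat dvd_rfl) (by omega) hleg))
    rw [sub_neg_eq_add] at hs
    exact exists_rat_sq_add_mul_sq_eq_of_dvd hc hq hqc hs hr
  · have hq2 : q ≠ 2 := by omega
    obtain ⟨r, hr⟩ := ZMod.exists_dvd_sq_sub_of_isSquare (a := 2)
      (by exact_mod_cast (ZMod.exists_sq_eq_two_iff hq2).mpr (Or.inr hq8))
    exact exists_rat_sq_add_mul_sq_eq_of_dvd hc hq hq2 (s := 1) (by omega) hr
end

section
/- Let p > 3 and c be distinct primes with c·p ≡ 3 (mod 4), let q be a prime satisfying condition (1), and let r' be an integer with r'² + c·p ≡ 0 (mod 4q). Then the ℤ-submodule O'_c(q,r') of ℍ[ℚ, −cp, −q] is closed under multiplication (hence is a subring containing 1), and its discriminant with respect to the basis e₁ = 1, e₂ = (1+i)/2, e₃ = j, e₄ = (r'·j+i·j)/(2q), namely det(Trd(e_s · star(e_t)))_{1≤s,t≤4}, equals c²·p². -/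
open Quaternion

/-- The reduced trace of a quaternion, `Trd x = x + star x`, as a rational number. -/
def Trd {a b : ℚ} (x : ℍ[ℚ, a, b]) : ℚ := (x + star x).re

/-- The basis `1, (1+i)/2, j, (r'·j+i·j)/(2q)` of the Eichler order `O'_c(q,r')`
inside `ℍ[ℚ, −cp, −q]`. -/
noncomputable def O'Basis (p c q : ℕ) (r' : ℤ) :
    Fin 4 → ℍ[ℚ, -((c : ℚ) * (p : ℚ)), -(q : ℚ)] :=
  ![1,
    (2 : ℚ)⁻¹ • (1 + (⟨0, 1, 0, 0⟩ : ℍ[ℚ, -((c : ℚ) * (p : ℚ)), -(q : ℚ)])),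
    (⟨0, 0, 1, 0⟩ : ℍ[ℚ, -((c : ℚ) * (p : ℚ)), -(q : ℚ)]),
    (2 * (q : ℚ))⁻¹ • ((r' : ℚ) • (⟨0, 0, 1, 0⟩ : ℍ[ℚ, -((c : ℚ) * (p : ℚ)), -(q : ℚ)]) +
      (⟨0, 1, 0, 0⟩ : ℍ[ℚ, -((c : ℚ) * (p : ℚ)), -(q : ℚ)]) * ⟨0, 0, 1, 0⟩)]

/-- The ℤ-submodule `O'_c(q,r')` of `ℍ[ℚ, −cp, −q]` spanned by
`1, (1+i)/2, j, (r'·j+i·j)/(2q)`. -/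
noncomputable def O'cqr (p c q : ℕ) (r' : ℤ) :
    Submodule ℤ ℍ[ℚ, -((c : ℚ) * (p : ℚ)), -(q : ℚ)] :=
  Submodule.span ℤ (Set.range (O'Basis p c q r'))

/-! Write `ω = (1 + i)/2` and `η = (r'j + ij)/(2q)`. Since `cp ≡ 3 (mod 4)` and `4q ∣ r'² + cp`,
`r' = 2s + 1` is odd and `r'² + cp = 4qm` for integers `s, m`; in terms of these the whole
multiplication table of `1, ω, j, η` has integer coefficients (e.g. `ω² = ω + s(s+1) − qm`,
`jη = ω − (s+1)`, `η² = −m`), so the ℤ-span is closed under multiplication. The trace form is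
block diagonal with blocks `[[2, 1], [1, (1+cp)/2]]` and `[[2q, r'], [r', (r'²+cp)/(2q)]]`, each of
determinant `cp`. -/

theorem Int.odd_of_four_dvd_sq_add {r k : ℤ} (h : 4 ∣ r ^ 2 + k) (hk : k % 4 = 3) : Odd r := by
  rcases Int.even_or_odd r with ⟨t, rfl⟩ | hr
  · obtain ⟨u, hu⟩ := h
    have : k = 4 * (u - t * t) := by linear_combination hu
    omega
  · exact hr

theorem Submodule.mul_mem_span_range {R A ι : Type*} [CommSemiring R] [Semiring A] [Algebra R A]
    {e : ι → A} (he : ∀ u v, e u * e v ∈ span R (Set.range e)) {x y : A}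
    (hx : x ∈ span R (Set.range e)) (hy : y ∈ span R (Set.range e)) :
    x * y ∈ span R (Set.range e) := by
  have hle : span R (Set.range e) * span R (Set.range e) ≤ span R (Set.range e) := by
    rw [span_mul_span, span_le]
    rintro _ ⟨_, ⟨u, rfl⟩, _, ⟨v, rfl⟩, rfl⟩
    exact he u v
  exact hle (mul_mem_mul hx hy)

namespace O'cqr

attribute [local simp] QuaternionAlgebra.re_mul QuaternionAlgebra.imI_mul QuaternionAlgebra.imJ_mul
  QuaternionAlgebra.imK_mul

section MultiplicationTable

variable {a : ℚ} {b : ℕ} {r s m : ℤ}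

local notation "𝕚" => (⟨0, 1, 0, 0⟩ : ℍ[ℚ, -a, -(b : ℚ)])
local notation "𝕛" => (⟨0, 0, 1, 0⟩ : ℍ[ℚ, -a, -(b : ℚ)])
local notation "ω" => (2 : ℚ)⁻¹ • (1 + 𝕚)
local notation "η" => (2 * (b : ℚ))⁻¹ • ((r : ℚ) • 𝕛 + 𝕚 * 𝕛)

theorem omega_mul_omega (hr : r = 2 * s + 1) (hm : (r : ℚ) ^ 2 + a = 4 * b * m) :
    ω * ω = ω + (s * (s + 1) - b * m) • (1 : ℍ[ℚ, -a, -(b : ℚ)]) := by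
  obtain rfl : a = 4 * b * m - r ^ 2 := by linarith
  subst hr
  ext <;> simp <;> ring

theorem omega_mul_j (hb : b ≠ 0) (hr : r = 2 * s + 1) :
    ω * 𝕛 = (-s) • 𝕛 + (b : ℤ) • η := by
  subst hr
  ext <;> simp <;> field_simp
  ring

theorem j_mul_omega (hb : b ≠ 0) (hr : r = 2 * s + 1) :
    𝕛 * ω = (s + 1) • 𝕛 + (-b : ℤ) • η := by
  subst hr
  ext <;> simp <;> field_simp
  ring

theorem omega_mul_eta (hb : b ≠ 0) (hr : r = 2 * s + 1) (hm : (r : ℚ) ^ 2 + a = 4 * b * m) :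
    ω * η = (-m) • 𝕛 + (s + 1) • η := by
  obtain rfl : a = 4 * b * m - r ^ 2 := by linarith
  subst hr
  ext <;> simp <;> field_simp <;> ring

theorem eta_mul_omega (hb : b ≠ 0) (hr : r = 2 * s + 1) (hm : (r : ℚ) ^ 2 + a = 4 * b * m) :
    η * ω = m • 𝕛 + (-s) • η := by
  obtain rfl : a = 4 * b * m - r ^ 2 := by linarith
  subst hr
  ext <;> simp <;> field_simp <;> ring

theorem j_mul_j : 𝕛 * 𝕛 = (-b : ℤ) • (1 : ℍ[ℚ, -a, -(b : ℚ)]) := by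
  ext <;> simp

theorem j_mul_eta (hb : b ≠ 0) (hr : r = 2 * s + 1) :
    𝕛 * η = ω + (-(s + 1)) • (1 : ℍ[ℚ, -a, -(b : ℚ)]) := by
  subst hr
  ext <;> simp <;> field_simp
  ring

theorem eta_mul_j (hb : b ≠ 0) (hr : r = 2 * s + 1) :
    η * 𝕛 = -ω + (-s) • (1 : ℍ[ℚ, -a, -(b : ℚ)]) := by
  subst hr
  ext <;> simp <;> field_simp
  ring

theorem eta_mul_eta (hb : b ≠ 0) (hm : (r : ℚ) ^ 2 + a = 4 * b * m) :
    η * η = (-m) • (1 : ℍ[ℚ, -a, -(b : ℚ)]) := by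
  obtain rfl : a = 4 * b * m - r ^ 2 := by linarith
  ext <;> simp <;> field_simp <;> ring

end MultiplicationTable

variable {p c q : ℕ} {r' : ℤ}

theorem basis_mem (i : Fin 4) : O'Basis p c q r' i ∈ O'cqr p c q r' :=
  Submodule.subset_span ⟨i, rfl⟩

theorem basis_mul_basis_mem {s m : ℤ} (hq : q ≠ 0) (hr : r' = 2 * s + 1)
    (hm : (r' : ℚ) ^ 2 + c * p = 4 * q * m) (u v : Fin 4) :
    O'Basis p c q r' u * O'Basis p c q r' v ∈ O'cqr p c q r' := by
  have hmem : ∀ i, O'Basis p c q r' i ∈ O'cqr p c q r' := basis_mem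
  have h1 := hmem 0
  have hω := hmem 1
  have hj := hmem 2
  have hη := hmem 3
  simp only [O'Basis, Fin.isValue, Matrix.cons_val] at h1 hω hj hη
  fin_cases u <;> fin_cases v <;>
    simp only [O'Basis, Fin.zero_eta, Fin.isValue, Fin.mk_one, Fin.reduceFinMk, Matrix.cons_val,
      one_mul, mul_one, omega_mul_omega hr hm, omega_mul_j hq hr, j_mul_omega hq hr,
      omega_mul_eta hq hr hm, eta_mul_omega hq hr hm, j_mul_j, j_mul_eta hq hr, eta_mul_j hq hr,
      eta_mul_eta hq hm] <;>
    apply_rules [add_mem, neg_mem, Submodule.smul_mem]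

theorem trd_gram (hq : q ≠ 0) :
    Matrix.of (fun s t : Fin 4 => Trd (O'Basis p c q r' s * star (O'Basis p c q r' t))) =
      (!![2, 1, 0, 0;
          1, (1 + c * p) / 2, 0, 0;
          0, 0, 2 * q, r';
          0, 0, r', (r' ^ 2 + c * p) / (2 * q)] : Matrix (Fin 4) (Fin 4) ℚ) := by
  ext s t
  fin_cases s <;> fin_cases t <;> simp [O'Basis, Trd] <;> field_simp <;> ring

theorem det_trd_gram (hq : q ≠ 0) :
    Matrix.det (Matrix.of fun s t : Fin 4 =>
        Trd (O'Basis p c q r' s * star (O'Basis p c q r' t))) = ((c : ℚ) * p) ^ 2 := by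
  rw [trd_gram hq]
  simp [Matrix.det_succ_row_zero, Fin.sum_univ_succ, Fin.succAbove]
  field_simp
  ring

end O'cqr

theorem O'cqr_isOrder_and_disc_general (p c q : ℕ) (hcp : c * p % 4 = 3) (hq : q.Prime)
    (r' : ℤ) (hr' : (4 * (q : ℤ)) ∣ r' ^ 2 + (c : ℤ) * (p : ℤ)) :
    (1 : ℍ[ℚ, -((c : ℚ) * (p : ℚ)), -(q : ℚ)]) ∈ O'cqr p c q r' ∧
    (∀ x ∈ O'cqr p c q r', ∀ y ∈ O'cqr p c q r', x * y ∈ O'cqr p c q r') ∧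
    Matrix.det (Matrix.of fun s t : Fin 4 =>
        Trd (O'Basis p c q r' s * star (O'Basis p c q r' t))) =
      (c : ℚ) ^ 2 * (p : ℚ) ^ 2 := by
  obtain ⟨m, hm⟩ := hr'
  obtain ⟨s, hs⟩ : Odd r' :=
    Int.odd_of_four_dvd_sq_add ⟨q * m, by rw [hm]; ring⟩ (by exact_mod_cast hcp)
  have hmℚ : (r' : ℚ) ^ 2 + c * p = 4 * q * m := by exact_mod_cast hm
  refine ⟨O'cqr.basis_mem 0, fun x hx y hy => ?_, ?_⟩
  · exact Submodule.mul_mem_span_range (O'cqr.basis_mul_basis_mem hq.ne_zero hs hmℚ) hx hy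
  · rw [O'cqr.det_trd_gram hq.ne_zero]
    ring

/-- If `cp ≡ 3 (mod 4)`, then `O'_c(q,r')` contains `1`, is closed under multiplication, and
its discriminant with respect to the basis `1, (1+i)/2, j, (r'·j+i·j)/(2q)` is `c²·p²`. -/
theorem O'cqr_isOrder_and_disc (p c q : ℕ) (hp : p.Prime) (hp3 : 3 < p) (hc : c.Prime)
    (hpc : p ≠ c) (hcp : c * p % 4 = 3) (hq : q.Prime) (hcond : SatisfiesCond1 p c q hq)
    (r' : ℤ) (hr' : (4 * (q : ℤ)) ∣ r' ^ 2 + (c : ℤ) * (p : ℤ)) :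
    (1 : ℍ[ℚ, -((c : ℚ) * (p : ℚ)), -(q : ℚ)]) ∈ O'cqr p c q r' ∧
    (∀ x ∈ O'cqr p c q r', ∀ y ∈ O'cqr p c q r', x * y ∈ O'cqr p c q r') ∧
    Matrix.det (Matrix.of fun s t : Fin 4 =>
        Trd (O'Basis p c q r' s * star (O'Basis p c q r' t))) =
      (c : ℚ) ^ 2 * (p : ℚ) ^ 2 :=
  O'cqr_isOrder_and_disc_general p c q hcp hq r' hr'
end

section
/- Let p > 3 and c be distinct primes, let q be a prime satisfying condition (1), and let r be an integer with r² + c·p ≡ 0 (mod q). For all rational numbers w, x, y, z, the element γ = w + x·(1+j)/2 + y·(i+i·j)/2 + z·(r·j+i·j)/q of ℍ[ℚ, −cp, −q] satisfies Trd(γ) = 2w + x and Nrd(γ) = (w + x/2)² + q·(x/2 + r·z/q)² + c·p·y²/4 + c·p·q·(y/2 + z/q)². In particular, when y = 0 one has 4·Nrd(γ) − Trd(γ)² = q·x² + 4·r·x·z + ((4r² + 4cp)/q)·z². -/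
/-!
In the basis `1, i, j, i·j` the element `γ` has coordinates
`(w + x/2, y/2, x/2 + r·z/q, y/2 + z/q)`, and on `ℍ[ℚ, a, b]` the reduced norm is the diagonal
form `⟨1, -a, -b, a·b⟩`, here `⟨1, c·p, q, c·p·q⟩`. Everything then follows by clearing the
denominator `q`.
-/

open Quaternion

/-- The reduced norm `Nrd x = x · star x`, as a rational number. -/
def Nrd {a b : ℚ} (x : ℍ[ℚ, a, b]) : ℚ := (x * star x).re

namespace QuaternionAlgebra

variable {R : Type*} [CommRing R] {a b : R}

theorem mk_i_mul_mk_j : (⟨0, 1, 0, 0⟩ : ℍ[R, a, b]) * ⟨0, 0, 1, 0⟩ = ⟨0, 0, 0, 1⟩ := by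
  ext <;> simp

theorem re_self_add_star (x : ℍ[R, a, b]) : (x + star x).re = 2 * x.re := by
  simp [two_mul]

theorem re_self_mul_star (x : ℍ[R, a, b]) :
    (x * star x).re = x.re ^ 2 - a * x.imI ^ 2 - b * x.imJ ^ 2 + a * b * x.imK ^ 2 := by
  simp only [re_mul, re_star, imI_star, imJ_star, imK_star]
  ring

end QuaternionAlgebra

theorem ocqr_elt_eq_mk {K : Type*} [Field K] {a b : K} (q r w x y z : K) :
    (w : ℍ[K, a, b]) + x • ((2 : K)⁻¹ • (1 + ⟨0, 0, 1, 0⟩)) +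
      y • ((2 : K)⁻¹ • (⟨0, 1, 0, 0⟩ + ⟨0, 1, 0, 0⟩ * ⟨0, 0, 1, 0⟩)) +
      z • (q⁻¹ • (r • ⟨0, 0, 1, 0⟩ + ⟨0, 1, 0, 0⟩ * ⟨0, 0, 1, 0⟩)) =
      ⟨w + x / 2, y / 2, x / 2 + r * z / q, y / 2 + z / q⟩ := by
  rw [QuaternionAlgebra.mk_i_mul_mk_j]
  ext <;> simp <;> ring

theorem trd_nrd_of_Ocqr_elt_general (p c q : ℕ) (hq : q.Prime)
    (r : ℤ) (w x y z : ℚ)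
    (γ : ℍ[ℚ, -((c : ℚ) * (p : ℚ)), -(q : ℚ)])
    (hγ : γ = ((w : ℚ) : ℍ[ℚ, -((c : ℚ) * (p : ℚ)), -(q : ℚ)]) +
      x • ((2 : ℚ)⁻¹ • (1 + (⟨0, 0, 1, 0⟩ : ℍ[ℚ, -((c : ℚ) * (p : ℚ)), -(q : ℚ)]))) +
      y • ((2 : ℚ)⁻¹ • ((⟨0, 1, 0, 0⟩ : ℍ[ℚ, -((c : ℚ) * (p : ℚ)), -(q : ℚ)]) +
        (⟨0, 1, 0, 0⟩ : ℍ[ℚ, -((c : ℚ) * (p : ℚ)), -(q : ℚ)]) * ⟨0, 0, 1, 0⟩)) +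
      z • ((q : ℚ)⁻¹ • ((r : ℚ) • (⟨0, 0, 1, 0⟩ : ℍ[ℚ, -((c : ℚ) * (p : ℚ)), -(q : ℚ)]) +
        (⟨0, 1, 0, 0⟩ : ℍ[ℚ, -((c : ℚ) * (p : ℚ)), -(q : ℚ)]) * ⟨0, 0, 1, 0⟩))) :
    Trd γ = 2 * w + x ∧
    Nrd γ = (w + x / 2) ^ 2 + (q : ℚ) * (x / 2 + (r : ℚ) * z / (q : ℚ)) ^ 2 +
      (c : ℚ) * (p : ℚ) * y ^ 2 / 4 +
      (c : ℚ) * (p : ℚ) * (q : ℚ) * (y / 2 + z / (q : ℚ)) ^ 2 ∧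
    (y = 0 → 4 * Nrd γ - Trd γ ^ 2 =
      (q : ℚ) * x ^ 2 + 4 * (r : ℚ) * x * z +
        ((4 * (r : ℚ) ^ 2 + 4 * (c : ℚ) * (p : ℚ)) / (q : ℚ)) * z ^ 2) := by
  have hq0 : (q : ℚ) ≠ 0 := by exact_mod_cast hq.ne_zero
  rw [ocqr_elt_eq_mk] at hγ
  simp only [hγ, Trd, Nrd, QuaternionAlgebra.re_self_add_star,
    QuaternionAlgebra.re_self_mul_star]
  refine ⟨by ring, by field_simp; ring, ?_⟩
  rintro rfl
  field_simp
  ring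

/-- Reduced trace and norm of a general element
`γ = w + x·(1+j)/2 + y·(i+i·j)/2 + z·(r·j+i·j)/q` of the Eichler order `O_c(q,r)`. -/
theorem trd_nrd_of_Ocqr_elt (p c q : ℕ) (hp : p.Prime) (hp3 : 3 < p) (hc : c.Prime)
    (hpc : p ≠ c) (hq : q.Prime) (hcond : SatisfiesCond1 p c q hq)
    (r : ℤ) (hr : (q : ℤ) ∣ r ^ 2 + (c : ℤ) * (p : ℤ)) (w x y z : ℚ)
    (γ : ℍ[ℚ, -((c : ℚ) * (p : ℚ)), -(q : ℚ)])
    (hγ : γ = ((w : ℚ) : ℍ[ℚ, -((c : ℚ) * (p : ℚ)), -(q : ℚ)]) +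
      x • ((2 : ℚ)⁻¹ • (1 + (⟨0, 0, 1, 0⟩ : ℍ[ℚ, -((c : ℚ) * (p : ℚ)), -(q : ℚ)]))) +
      y • ((2 : ℚ)⁻¹ • ((⟨0, 1, 0, 0⟩ : ℍ[ℚ, -((c : ℚ) * (p : ℚ)), -(q : ℚ)]) +
        (⟨0, 1, 0, 0⟩ : ℍ[ℚ, -((c : ℚ) * (p : ℚ)), -(q : ℚ)]) * ⟨0, 0, 1, 0⟩)) +
      z • ((q : ℚ)⁻¹ • ((r : ℚ) • (⟨0, 0, 1, 0⟩ : ℍ[ℚ, -((c : ℚ) * (p : ℚ)), -(q : ℚ)]) +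
        (⟨0, 1, 0, 0⟩ : ℍ[ℚ, -((c : ℚ) * (p : ℚ)), -(q : ℚ)]) * ⟨0, 0, 1, 0⟩))) :
    Trd γ = 2 * w + x ∧
    Nrd γ = (w + x / 2) ^ 2 + (q : ℚ) * (x / 2 + (r : ℚ) * z / (q : ℚ)) ^ 2 +
      (c : ℚ) * (p : ℚ) * y ^ 2 / 4 +
      (c : ℚ) * (p : ℚ) * (q : ℚ) * (y / 2 + z / (q : ℚ)) ^ 2 ∧
    (y = 0 → 4 * Nrd γ - Trd γ ^ 2 =
      (q : ℚ) * x ^ 2 + 4 * (r : ℚ) * x * z +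
        ((4 * (r : ℚ) ^ 2 + 4 * (c : ℚ) * (p : ℚ)) / (q : ℚ)) * z ^ 2) :=
  trd_nrd_of_Ocqr_elt_general p c q hq r w x y z γ hγ
end

section
/- Let p > 3 and c be primes with 16·c < 3·p. Let a, b, a' be integers with 0 < a, −a < b ≤ a ≤ a' and b² − 4·a·a' = −16·c·p. If x and k are integers with k ≥ 0 and a·a' − x² = 4·k·p, then k = c and (2x = b or 2x = −b). -/
/-- For a reduced form `(a,b,a')` of discriminant `−16cp` with `16c < 3p`, if
`a·a' − x² = 4·k·p` with `k ≥ 0`, then `k = c` and `x = ±b/2`. -/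
theorem reduced_form_disc_neg16cp_aux (p c : ℕ) (hp : p.Prime) (hp3 : 3 < p) (hc : c.Prime)
    (hcp : 16 * c < 3 * p) (a b a' : ℤ) (ha : 0 < a) (hba : -a < b) (hab : b ≤ a)
    (haa' : a ≤ a') (hdisc : b ^ 2 - 4 * a * a' = -(16 * (c : ℤ) * (p : ℤ)))
    (x k : ℤ) (hk : 0 ≤ k) (hx : a * a' - x ^ 2 = 4 * k * (p : ℤ)) :
    k = (c : ℤ) ∧ (2 * x = b ∨ 2 * x = -b) := by
  have hp0 : (0:ℤ) < (p:ℤ) := by exact_mod_cast hp.pos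
  have hcpI : 16 * (c:ℤ) < 3 * (p:ℤ) := by exact_mod_cast hcp
  -- b is even
  obtain ⟨b', rfl⟩ : ∃ b', b = 2 * b' := by
    have h2 : (2:ℤ) ∣ b := by
      refine Int.prime_two.dvd_of_dvd_pow (n := 2) ?_
      exact ⟨2 * a * a' - 8 * (c:ℤ) * (p:ℤ), by linarith⟩
    exact h2
  -- basic bounds
  have hb2 : (2 * b') ^ 2 ≤ a * a' := by nlinarith
  have h3 : 3 * (a * a') ≤ 16 * (c:ℤ) * (p:ℤ) := by nlinarith
  have haap : a * a' < (p:ℤ) * (p:ℤ) := by nlinarith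
  have hx2 : x ^ 2 < (p:ℤ) * (p:ℤ) := by nlinarith
  have hb'2 : 4 * b' ^ 2 < (p:ℤ) * (p:ℤ) := by nlinarith
  -- a*a' = b'^2 + 4cp, hence (x-b')(x+b') = 4(c-k)p
  have hkey : (x - b') * (x + b') = 4 * ((c:ℤ) - k) * (p:ℤ) := by nlinarith
  -- x - b' is even
  obtain ⟨u, hu⟩ : ∃ u, x - b' = 2 * u := by
    have h2 : (2:ℤ) ∣ (x - b') := by
      refine Int.prime_two.dvd_of_dvd_pow (n := 2) ?_
      exact ⟨2 * ((c:ℤ) - k) * (p:ℤ) - (x - b') * b', by nlinarith⟩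
    exact h2
  have hxu : x = b' + 2 * u := by linarith
  subst hxu
  have huv : u * (u + b') = ((c:ℤ) - k) * (p:ℤ) := by
    have h4 : 4 * (u * (u + b')) = 4 * (((c:ℤ) - k) * (p:ℤ)) := by linear_combination hkey
    exact mul_left_cancel₀ (by norm_num) h4
  have hpp : 0 < (p:ℤ) * (p:ℤ) := mul_pos hp0 hp0
  have hid : 4 * u ^ 2 + (2 * b' + 2 * u) ^ 2 = 2 * (b' + 2 * u) ^ 2 + 2 * b' ^ 2 := by ring
  have hu2 : u ^ 2 < (p:ℤ) * (p:ℤ) := by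
    linarith [hid, sq_nonneg (2 * b' + 2 * u), hx2, hb'2, hpp]
  have hv2 : (u + b') ^ 2 < (p:ℤ) * (p:ℤ) := by
    have hid2 : 4 * (u + b') ^ 2 + 4 * u ^ 2 = 2 * (b' + 2 * u) ^ 2 + 2 * b' ^ 2 := by ring
    linarith [hid2, sq_nonneg u, hx2, hb'2, hpp]
  have hpI : Prime (p:ℤ) := Nat.prime_iff_prime_int.mp hp
  have hdvd : (p:ℤ) ∣ u * (u + b') := ⟨(c:ℤ) - k, by linarith⟩
  have hzero : ∀ w : ℤ, (p:ℤ) ∣ w → w ^ 2 < (p:ℤ) * (p:ℤ) → w = 0 := by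
    intro w hw hw2
    by_contra hw0
    have hle : (p:ℤ) ≤ |w| := Int.le_of_dvd (abs_pos.mpr hw0) ((dvd_abs _ _).mpr hw)
    have hle2 : (p:ℤ) * (p:ℤ) ≤ |w| * |w| := mul_self_le_mul_self hp0.le hle
    linarith [sq_abs w, hle2, hw2]
  rcases (hpI.dvd_mul.mp hdvd) with h | h
  · have hu0 : u = 0 := hzero u h hu2
    subst hu0
    have hck : (c:ℤ) - k = 0 := by
      have h0 : ((c:ℤ) - k) * (p:ℤ) = 0 := by linarith [huv]
      rcases mul_eq_zero.mp h0 with h' | h'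
      · exact h'
      · exact absurd h' hp0.ne'
    constructor
    · linarith
    · left; linarith
  · have hv0 : u + b' = 0 := hzero _ h hv2
    have hck : (c:ℤ) - k = 0 := by
      have : ((c:ℤ) - k) * (p:ℤ) = 0 := by rw [← huv, hv0, mul_zero]
      rcases mul_eq_zero.mp this with h' | h'
      · exact h'
      · exact absurd h' hp0.ne'
    constructor
    · linarith
    · right; linarith
end

section
/- Let p > 3 and c be primes with 16·c < 3·p and c·p ≡ 3 (mod 4). Let a, b, a' be integers with 0 < a, −a < b ≤ a ≤ a' and b² − 4·a·a' = −c·p. If x and k are integers with k ≥ 0 and 16·a·a' − x² = 4·k·p, then k = c and (x = 2b or x = −2b). -/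
/-- For a reduced form `(a,b,a')` of discriminant `−cp` with `cp ≡ 3 (mod 4)` and
`16c < 3p`, if `16·a·a' − x² = 4·k·p` with `k ≥ 0`, then `k = c` and `x = ±2b`. -/
theorem reduced_form_disc_neg_cp_aux (p c : ℕ) (hp : p.Prime) (hp3 : 3 < p) (hc : c.Prime)
    (hsize : 16 * c < 3 * p) (hcp : c * p % 4 = 3)
    (a b a' : ℤ) (ha : 0 < a) (hba : -a < b) (hab : b ≤ a) (haa' : a ≤ a')
    (hdisc : b ^ 2 - 4 * a * a' = -((c : ℤ) * (p : ℤ)))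
    (x k : ℤ) (hk : 0 ≤ k) (hx : 16 * (a * a') - x ^ 2 = 4 * k * (p : ℤ)) :
    k = (c : ℤ) ∧ (x = 2 * b ∨ x = -(2 * b)) := by
  have hpZ : (0:ℤ) < (p:ℤ) := by exact_mod_cast hp.pos
  have hpp : Prime (p:ℤ) := Nat.prime_iff_prime_int.mp hp
  have h4 : 4 * (a * a') = b ^ 2 + (c:ℤ) * p := by linarith
  -- x is even
  have h2dvd : (2:ℤ) ∣ x := by
    have hsq : (2:ℤ) ∣ x ^ 2 := ⟨2 * (4 * (a * a') - k * p), by linarith⟩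
    exact Int.prime_two.dvd_of_dvd_pow hsq
  obtain ⟨y, hxy⟩ := h2dvd
  subst hxy
  have hy2 : y ^ 2 = b ^ 2 + ((c:ℤ) - k) * (p:ℤ) := by nlinarith [hx, h4]
  have h16 : 16 * (c:ℤ) < 3 * (p:ℤ) := by exact_mod_cast hsize
  have hb2 : 3 * b ^ 2 ≤ (c:ℤ) * p := by
    have h1 : b ^ 2 ≤ a ^ 2 := sq_le_sq' (by linarith) hab
    nlinarith [mul_le_mul_of_nonneg_left haa' ha.le]
  have hcpsq : 16 * ((c:ℤ) * p) < 3 * (p:ℤ) ^ 2 := by nlinarith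
  have hb : 4 * |b| < (p:ℤ) := by
    nlinarith [sq_abs b, abs_nonneg b]
  have hyb : 2 * |y| < (p:ℤ) := by
    nlinarith [sq_abs y, abs_nonneg y, mul_nonneg hk hpZ.le]
  have hdvd : (p:ℤ) ∣ (y - b) * (y + b) := ⟨(c:ℤ) - k, by linear_combination hy2⟩
  have habs1 : |y - b| ≤ |y| + |b| := abs_sub y b
  have habs2 : |y + b| ≤ |y| + |b| := abs_add_le y b
  rcases (hpp.dvd_mul).mp hdvd with hd | hd
  · have hz : y - b = 0 := by
      by_contra h
      have := Int.le_of_dvd (abs_pos.mpr h) ((dvd_abs _ _).mpr hd)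
      linarith
    have hyb' : y = b := by linarith
    have hck : ((c:ℤ) - k) * (p:ℤ) = 0 := by
      rw [hyb'] at hy2; ring_nf at hy2 ⊢; linarith
    have : (c:ℤ) - k = 0 := by
      rcases mul_eq_zero.mp hck with h | h
      · exact h
      · exact absurd h (ne_of_gt hpZ)
    exact ⟨by linarith, Or.inl (by linarith)⟩
  · have hz : y + b = 0 := by
      by_contra h
      have := Int.le_of_dvd (abs_pos.mpr h) ((dvd_abs _ _).mpr hd)
      linarith
    have hyb' : y = -b := by linarith
    have hck : ((c:ℤ) - k) * (p:ℤ) = 0 := by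
      rw [hyb'] at hy2; ring_nf at hy2 ⊢; linarith
    have : (c:ℤ) - k = 0 := by
      rcases mul_eq_zero.mp hck with h | h
      · exact h
      · exact absurd h (ne_of_gt hpZ)
    exact ⟨by linarith, Or.inr (by linarith)⟩
end

section
/- Let p > 3 and c be primes with c·p ≡ 3 (mod 4) and 16·c < 3·p. If x and k are integers with k > 0 and 4·c·(c + p) − x² = 4·k·p, then k = c and (x = 2c or x = −2c). -/
/-- If `cp ≡ 3 (mod 4)`, `16c < 3p`, and `4·c·(c+p) − x² = 4·k·p` with `k > 0`, then
`k = c` and `x = ±2c`. -/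
theorem common_root_H4c_Hcp_aux (p c : ℕ) (hp : p.Prime) (hp3 : 3 < p) (hc : c.Prime)
    (hcp : c * p % 4 = 3) (hsize : 16 * c < 3 * p)
    (x k : ℤ) (hk : 0 < k)
    (hx : 4 * (c : ℤ) * ((c : ℤ) + (p : ℤ)) - x ^ 2 = 4 * k * (p : ℤ)) :
    k = (c : ℤ) ∧ (x = 2 * (c : ℤ) ∨ x = -(2 * (c : ℤ))) := by
  have hc2 : (2:ℤ) ≤ (c:ℤ) := by exact_mod_cast hc.two_le
  have hp4 : (4:ℤ) ≤ (p:ℤ) := by exact_mod_cast hp3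
  have hsz : (16:ℤ) * c < 3 * p := by exact_mod_cast hsize
  have hpp : Prime (p:ℤ) := Nat.prime_iff_prime_int.mp hp
  have hx4 : x ^ 2 = 4 * ((c:ℤ)^2 + (p:ℤ) * ((c:ℤ) - k)) := by linear_combination -hx
  have h2 : (2:ℤ) ∣ x := by
    have h : (2:ℤ) ∣ x * x := ⟨2 * ((c:ℤ)^2 + (p:ℤ) * ((c:ℤ) - k)), by linear_combination hx4⟩
    rcases Int.prime_two.dvd_mul.mp h with h' | h' <;> exact h'
  obtain ⟨y, hy⟩ := h2
  have hyy : y ^ 2 = (c:ℤ)^2 + (p:ℤ) * ((c:ℤ) - k) := by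
    have h4 : (4:ℤ) * y ^ 2 = 4 * ((c:ℤ)^2 + (p:ℤ) * ((c:ℤ) - k)) := by
      rw [hy] at hx4; linear_combination hx4
    exact mul_left_cancel₀ (by norm_num : (4:ℤ) ≠ 0) h4
  set z := |y| with hzdef
  have hz0 : 0 ≤ z := abs_nonneg y
  have hzz : z ^ 2 = (c:ℤ)^2 + (p:ℤ) * ((c:ℤ) - k) := by rw [hzdef, sq_abs]; exact hyy
  have hdvd : (p:ℤ) ∣ (z - c) * (z + c) := ⟨(c:ℤ) - k, by linear_combination hzz⟩
  have hbound : z ^ 2 ≤ (c:ℤ)^2 + (p:ℤ) * c - p := by nlinarith [hzz, hk, hp4]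
  have hzc : z = (c:ℤ) := by
    rcases hpp.dvd_mul.mp hdvd with h | h
    · have hzero : z - c = 0 := by
        refine Int.eq_zero_of_abs_lt_dvd h ?_
        rw [abs_lt]
        constructor <;> nlinarith [hbound, hz0, hc2, hp4, hsz]
      linarith
    · exfalso
      have hge : (p:ℤ) ≤ z + c := Int.le_of_dvd (by linarith) h
      nlinarith [hbound, hz0, hc2, hp4, hsz]
  have hyc : y = (c:ℤ) ∨ y = -(c:ℤ) := (abs_eq (by linarith)).mp hzc
  have hkc : k = (c:ℤ) := by
    have : (p:ℤ) * ((c:ℤ) - k) = 0 := by nlinarith [hzz, hzc]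
    rcases mul_eq_zero.mp this with h | h
    · exfalso; linarith
    · linarith
  refine ⟨hkc, ?_⟩
  rcases hyc with h | h
  · left; rw [hy, h]
  · right; rw [hy, h]; ring
end

section
/- Let p > 3 and c be primes with 16·c < 3·p. Let a, b, a' be integers with 0 < a, −a < b ≤ a ≤ a', gcd(a,b,a') = 1, b² − 4·a·a' = −16·c·p, a ≡ 3 (mod 4), and c not dividing a. Let x, y be coprime integers with x² + a·y² = 4·c. Then (2b)² − 4·a·(4·(a' − p·y²)) = −16·p·x², the integer 4·(a' − p·y²) is positive, and gcd(a, 2b, 4·(a' − p·y²)) = 1; that is, (a, 2b, 4(a' − py²)) is a positive definite primitive integral binary quadratic form of discriminant −16·p·x². -/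
/-!
Substituting `4c = x² + a·y²` into `b² − 4aa' = −16cp` gives the discriminant identity, and it
also shows `a · 4(a' − p·y²) = b² + 4p·x² > 0`. For primitivity it suffices that `a` is prime
to `2b`: a prime dividing `a` and `b` divides `b² − 4aa' = −16cp`, but `a` is odd, prime to `c`,
and `a ≤ a·y² ≤ 4c < p`.
-/

theorem Int.sq_eq_one_of_gcd_zero_left {y : ℤ} (h : Int.gcd 0 y = 1) : y ^ 2 = 1 := by
  rw [Int.gcd_zero_left] at h
  rw [← Int.natAbs_sq, h, Nat.cast_one, one_pow]

theorem ne_zero_and_ne_zero_of_sq_add_mul_sq_eq_four_mul {a x y n : ℤ} (ha : a % 4 = 3)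
    (hxy : Int.gcd x y = 1) (h : x ^ 2 + a * y ^ 2 = 4 * n) : x ≠ 0 ∧ y ≠ 0 := by
  constructor
  · rintro rfl
    have hy := Int.sq_eq_one_of_gcd_zero_left hxy
    rw [hy] at h
    omega
  · rintro rfl
    have hx := Int.sq_eq_one_of_gcd_zero_left (Int.gcd_comm x 0 ▸ hxy)
    rw [hx] at h
    omega

theorem le_of_sq_add_mul_sq_eq {a x y m : ℤ} (ha : 0 ≤ a) (hy : y ≠ 0)
    (h : x ^ 2 + a * y ^ 2 = m) : a ≤ m := by
  have hy1 : 1 ≤ y ^ 2 := (one_le_sq_iff_one_le_abs y).mpr (Int.one_le_abs hy)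
  nlinarith [sq_nonneg x]

theorem IsCoprime.of_not_dvd_prime {R : Type*} [CommRing R] [IsBezout R] [IsDomain R] {a q : R}
    (hq : Prime q) (h : ¬ q ∣ a) : IsCoprime a q :=
  ((Prime.coprime_iff_not_dvd hq).mpr h).symm

theorem isCoprime_two_mul_of_isCoprime_discr {R : Type*} [CommRing R] {a b a' : R}
    (h2 : IsCoprime a 2) (hD : IsCoprime a (b ^ 2 - 4 * a * a')) : IsCoprime a (2 * b) := by
  have hb2 : IsCoprime a (b ^ 2) := by
    have h := hD.add_mul_left_right (4 * a')
    rwa [show b ^ 2 - 4 * a * a' + a * (4 * a') = b ^ 2 by ring] at h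
  exact h2.mul_right ((IsCoprime.pow_right_iff two_pos).mp hb2)

theorem derived_form_of_rep_four_c_general (p c : ℕ) (hp : p.Prime) (hc : c.Prime)
    (hsize : 16 * c < 3 * p) (a b a' : ℤ) (ha : 0 < a)
    (hdisc : b ^ 2 - 4 * a * a' = -(16 * (c : ℤ) * (p : ℤ)))
    (ha4 : a % 4 = 3) (hca : ¬ ((c : ℤ) ∣ a))
    (x y : ℤ) (hxy : Int.gcd x y = 1) (hrep : x ^ 2 + a * y ^ 2 = 4 * (c : ℤ)) :
    (2 * b) ^ 2 - 4 * a * (4 * (a' - (p : ℤ) * y ^ 2)) = -(16 * (p : ℤ) * x ^ 2) ∧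
    0 < 4 * (a' - (p : ℤ) * y ^ 2) ∧
    Int.gcd a (Int.gcd (2 * b) (4 * (a' - (p : ℤ) * y ^ 2))) = 1 := by
  obtain ⟨hx, hy⟩ := ne_zero_and_ne_zero_of_sq_add_mul_sq_eq_four_mul ha4 hxy hrep
  have hap : a < p := by
    have := le_of_sq_add_mul_sq_eq ha.le hy hrep
    omega
  have h2 : IsCoprime a 2 := .of_not_dvd_prime Int.prime_two (by omega)
  have hcp : IsCoprime a (16 * c * p) := by
    refine (IsCoprime.mul_right ?_ ?_).mul_right ?_
    · simpa using h2.pow_right (n := 4)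
    · exact .of_not_dvd_prime (Nat.prime_iff_prime_int.mp hc) hca
    · exact .of_not_dvd_prime (Nat.prime_iff_prime_int.mp hp)
        fun h => (Int.le_of_dvd ha h).not_gt hap
  have h2b : IsCoprime a (2 * b) :=
    isCoprime_two_mul_of_isCoprime_discr h2 (by rwa [hdisc, IsCoprime.neg_right_iff])
  refine ⟨by linear_combination 4 * hdisc + 16 * (p : ℤ) * hrep, ?_, ?_⟩
  · have hp0 := hp.pos
    refine pos_of_mul_pos_right (a := a) ?_ ha.le
    rw [show a * (4 * (a' - p * y ^ 2)) = b ^ 2 + 4 * p * x ^ 2 by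
      linear_combination -hdisc - 4 * (p : ℤ) * hrep]
    positivity
  · exact Int.isCoprime_iff_gcd_eq_one.mp (h2b.of_isCoprime_of_dvd_right (Int.gcd_dvd_left _ _))

/-- From a reduced primitive form `(a,b,a')` of discriminant `−16cp` with `a ≡ 3 (mod 4)`,
`c ∤ a`, and a coprime solution of `x² + a·y² = 4c`, one obtains the positive definite
primitive form `(a, 2b, 4(a' − p·y²))` of discriminant `−16·p·x²`. -/
theorem derived_form_of_rep_four_c (p c : ℕ) (hp : p.Prime) (hp3 : 3 < p) (hc : c.Prime)
    (hsize : 16 * c < 3 * p) (a b a' : ℤ) (ha : 0 < a) (hba : -a < b) (hab : b ≤ a)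
    (haa' : a ≤ a') (hprim : Int.gcd a (Int.gcd b a') = 1)
    (hdisc : b ^ 2 - 4 * a * a' = -(16 * (c : ℤ) * (p : ℤ)))
    (ha4 : a % 4 = 3) (hca : ¬ ((c : ℤ) ∣ a))
    (x y : ℤ) (hxy : Int.gcd x y = 1) (hrep : x ^ 2 + a * y ^ 2 = 4 * (c : ℤ)) :
    (2 * b) ^ 2 - 4 * a * (4 * (a' - (p : ℤ) * y ^ 2)) = -(16 * (p : ℤ) * x ^ 2) ∧
    0 < 4 * (a' - (p : ℤ) * y ^ 2) ∧
    Int.gcd a (Int.gcd (2 * b) (4 * (a' - (p : ℤ) * y ^ 2))) = 1 :=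
  derived_form_of_rep_four_c_general p c hp hc hsize a b a' ha hdisc ha4 hca x y hxy hrep
end

section
/- Let p > 3 and c be distinct odd primes with c·p ≡ 1 (mod 4). In the ring ℤ[√−cp] (Mathlib's Zsqrtd (−c·p)), the ideals I generated by {2, √−cp − 1} and J generated by {(cp+1)/2, √−cp − 1} lie in the same ideal class: there exist nonzero elements α, β of ℤ[√−cp] such that (α)·I = (β)·J, where (α) denotes the principal ideal generated by α. -/
/-! Writing `s = √−cp − 1` and `m = (cp+1)/2`, one has `s² + 2s + 2m = 0`, so `(s)·(2, s) = (2s, s²)`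
and `(2)·(m, s) = (2m, 2s)` are the same ideal: the generator `s²` differs from `−2m` by a multiple
of `2s`. -/

namespace Ideal

variable {R : Type*} [CommRing R]

theorem span_singleton_mul_span_pair (x a b : R) :
    span {x} * span {a, b} = span {x * a, x * b} := by
  rw [span_mul_span', Set.singleton_mul, Set.image_pair]

theorem span_singleton_mul_span_pair_eq_of_mul_self_add {s a m : R}
    (h : s * s + a * s + a * m = 0) :
    span {s} * span {a, s} = span {a} * span {m, s} := by
  have hss : s * s = -(a * m) - s * a := by linear_combination h
  rw [span_singleton_mul_span_pair, span_singleton_mul_span_pair, hss, span_pair_sub_left,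
    span_pair_neg, span_pair_comm, mul_comm s a]

end Ideal

namespace Zsqrtd

theorem sqrtd_sub_one_mul_self_add {d m : ℤ} (h : d + 2 * m = 1) :
    (sqrtd - 1 : ℤ√d) * (sqrtd - 1) + 2 * (sqrtd - 1) + 2 * (m : ℤ√d) = 0 := by
  have hd : ((d : ℤ) : ℤ√d) + 2 * m = 1 := by exact_mod_cast h
  linear_combination (dmuld (d := d)) + hd

theorem sqrtd_sub_one_ne_zero {d : ℤ} : (sqrtd - 1 : ℤ√d) ≠ 0 := fun h => by
  simpa using congrArg re h

end Zsqrtd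

theorem span_two_sqrtd_sub_one_ideal_class_general (p c : ℕ) (hcp : c * p % 4 = 1) :
    ∃ α β : Zsqrtd (-((c : ℤ) * (p : ℤ))), α ≠ 0 ∧ β ≠ 0 ∧
      Ideal.span ({α} : Set (Zsqrtd (-((c : ℤ) * (p : ℤ))))) *
        Ideal.span ({2, Zsqrtd.sqrtd - 1} : Set (Zsqrtd (-((c : ℤ) * (p : ℤ))))) =
      Ideal.span ({β} : Set (Zsqrtd (-((c : ℤ) * (p : ℤ))))) *
        Ideal.span ({((((c : ℤ) * (p : ℤ) + 1) / 2 : ℤ) : Zsqrtd (-((c : ℤ) * (p : ℤ)))),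
          Zsqrtd.sqrtd - 1} : Set (Zsqrtd (-((c : ℤ) * (p : ℤ))))) := by
  have hdm : -((c : ℤ) * p) + 2 * (((c : ℤ) * p + 1) / 2) = 1 := by
    have : ((c * p : ℕ) : ℤ) % 4 = 1 := by exact_mod_cast hcp
    push_cast at this
    omega
  exact ⟨_, 2, Zsqrtd.sqrtd_sub_one_ne_zero, two_ne_zero,
    Ideal.span_singleton_mul_span_pair_eq_of_mul_self_add (Zsqrtd.sqrtd_sub_one_mul_self_add hdm)⟩

/-- In `ℤ[√−cp]` with `cp ≡ 1 (mod 4)`, the ideals `(2, √−cp − 1)` and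
`((cp+1)/2, √−cp − 1)` lie in the same ideal class. -/
theorem span_two_sqrtd_sub_one_ideal_class (p c : ℕ) (hp : p.Prime) (hp3 : 3 < p)
    (hc : c.Prime) (hcodd : c ≠ 2) (hpc : p ≠ c) (hcp : c * p % 4 = 1) :
    ∃ α β : Zsqrtd (-((c : ℤ) * (p : ℤ))), α ≠ 0 ∧ β ≠ 0 ∧
      Ideal.span ({α} : Set (Zsqrtd (-((c : ℤ) * (p : ℤ))))) *
        Ideal.span ({2, Zsqrtd.sqrtd - 1} : Set (Zsqrtd (-((c : ℤ) * (p : ℤ))))) =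
      Ideal.span ({β} : Set (Zsqrtd (-((c : ℤ) * (p : ℤ))))) *
        Ideal.span ({((((c : ℤ) * (p : ℤ) + 1) / 2 : ℤ) : Zsqrtd (-((c : ℤ) * (p : ℤ)))),
          Zsqrtd.sqrtd - 1} : Set (Zsqrtd (-((c : ℤ) * (p : ℤ))))) :=
  span_two_sqrtd_sub_one_ideal_class_general p c hcp
end

section
/- Let p > 3 and c be distinct primes, let q be a prime satisfying condition (1), and let r be an integer with r² + c·p ≡ 0 (mod q). Let (a,b,a') be a positive definite primitive reduced integral binary quadratic form of discriminant −16·c·p that is SL₂(ℤ)-equivalent to the form (q, 4r, (4r²+4cp)/q), and suppose a > 4. Then the first two successive minima of O_c(q,r) are a and a': every γ ∈ O_c(q,r) not lying in ℚ·1 satisfies 4·Nrd(γ) − Trd(γ)² ≥ a; there exists γ₁ ∈ O_c(q,r) with 4·Nrd(γ₁) − Trd(γ₁)² = a; and for such a γ₁, every γ ∈ O_c(q,r) with 1, γ₁, γ linearly independent over ℚ satisfies 4·Nrd(γ) − Trd(γ)² ≥ a', with equality attained by some such γ. -/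
open Quaternion

/-- The ℤ-submodule `O_c(q,r)` of `ℍ[ℚ, −cp, −q]` spanned by
`1, (1+j)/2, (i+i·j)/2, (r·j+i·j)/q`. -/
noncomputable def Ocqr (p c q : ℕ) (r : ℤ) :
    Submodule ℤ ℍ[ℚ, -((c : ℚ) * (p : ℚ)), -(q : ℚ)] :=
  Submodule.span ℤ
    {1,
     (2 : ℚ)⁻¹ • (1 + (⟨0, 0, 1, 0⟩ : ℍ[ℚ, -((c : ℚ) * (p : ℚ)), -(q : ℚ)])),
     (2 : ℚ)⁻¹ • ((⟨0, 1, 0, 0⟩ : ℍ[ℚ, -((c : ℚ) * (p : ℚ)), -(q : ℚ)]) +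
       (⟨0, 1, 0, 0⟩ : ℍ[ℚ, -((c : ℚ) * (p : ℚ)), -(q : ℚ)]) * ⟨0, 0, 1, 0⟩),
     (q : ℚ)⁻¹ • ((r : ℚ) • (⟨0, 0, 1, 0⟩ : ℍ[ℚ, -((c : ℚ) * (p : ℚ)), -(q : ℚ)]) +
       (⟨0, 1, 0, 0⟩ : ℍ[ℚ, -((c : ℚ) * (p : ℚ)), -(q : ℚ)]) * ⟨0, 0, 1, 0⟩)}

/-- `(a,b,a')` is a positive definite primitive reduced integral binary quadratic form. -/
def IsPosDefPrimitiveReduced (a b a' : ℤ) : Prop :=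
  0 < a ∧ -a < b ∧ b ≤ a ∧ a ≤ a' ∧ Int.gcd a (Int.gcd b a') = 1 ∧ (a = a' → 0 ≤ b)

/-- The forms `(a₁,b₁,a₁')` and `(a₂,b₂,a₂')` are `SL₂(ℤ)`-equivalent. -/
def FormEquiv (a₁ b₁ a₁' a₂ b₂ a₂' : ℤ) : Prop :=
  ∃ m₁₁ m₁₂ m₂₁ m₂₂ : ℤ, m₁₁ * m₂₂ - m₁₂ * m₂₁ = 1 ∧
    ∀ X Y : ℤ, a₁ * X ^ 2 + b₁ * X * Y + a₁' * Y ^ 2 =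
      a₂ * (m₁₁ * X + m₁₂ * Y) ^ 2 + b₂ * (m₁₁ * X + m₁₂ * Y) * (m₂₁ * X + m₂₂ * Y) +
        a₂' * (m₂₁ * X + m₂₂ * Y) ^ 2

/-!
Write `γ = w + x(1+j)/2 + y(i+ij)/2 + z(rj+ij)/q` and `B = (q, 4r, (4r²+4cp)/q)`. Then
`4(4 Nrd γ - Trd γ²) = 4cp·y² + B(2(x - yr), qy + 2z)`, which is `4·B(x, z)` on the plane `y = 0`.
On that plane the successive minima are those of `B`, hence those of the equivalent reduced
form `(a, b, a')`, namely `a` and `a'`. Off the plane the value exceeds `a'`: either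
`(2(x - yr), qy + 2z) = 0`, which forces `y` to be even (`q` is odd) and the value to be at
least `4cp`, or the value is at least `cp + a/4`. Both beat `a'` because
`16cp = 4aa' - b² ≥ 4aa' - a²` and `a > 4`.
-/

def evalForm (a b a' s t : ℤ) : ℤ := a * s ^ 2 + b * s * t + a' * t ^ 2

section Reduced

variable {a b a' : ℤ}

theorem le_evalForm_of_right_ne_zero (hb : |b| ≤ a) (haa' : a ≤ a') {s t : ℤ} (ht : t ≠ 0) :
    a' ≤ evalForm a b a' s t := by
  have ha : 0 ≤ a := (abs_nonneg b).trans hb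
  have hbst : -(|b| * |s| * |t|) ≤ b * s * t := by
    rw [← abs_mul, ← abs_mul]; exact neg_abs_le _
  have ht1 : 1 ≤ |t| := Int.one_le_abs ht
  unfold evalForm
  rw [← sq_abs s, ← sq_abs t]
  rcases le_or_gt |t| |s| with h | h
  · have : |b| * |s| * |t| ≤ a * |s| * |s| := by gcongr
    have : a' ≤ a' * |t| ^ 2 := le_mul_of_one_le_right (ha.trans haa') (by nlinarith)
    nlinarith
  · have : |b| * |s| * |t| ≤ a' * |s| * |t| := by gcongr; exact hb.trans haa'
    have : a' ≤ a' * (|t| * (|t| - |s|)) :=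
      le_mul_of_one_le_right (ha.trans haa') (by nlinarith)
    nlinarith

theorem le_evalForm (hb : |b| ≤ a) (haa' : a ≤ a') {s t : ℤ} (hst : s ≠ 0 ∨ t ≠ 0) :
    a ≤ evalForm a b a' s t := by
  rcases eq_or_ne t 0 with rfl | ht
  · have hs : 1 ≤ s ^ 2 := sq_abs s ▸ one_le_pow₀ (Int.one_le_abs (hst.resolve_right (by simp)))
    have ha : 0 ≤ a := (abs_nonneg b).trans hb
    simp only [evalForm]
    nlinarith
  · exact haa'.trans (le_evalForm_of_right_ne_zero hb haa' ht)

end Reduced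

/-- `x₁ * z - x * z₁ ≠ 0` says that `(x₁, z₁)` and `(x, z)` are linearly independent. -/
structure IsSuccessiveMinima (B : ℤ → ℤ → ℤ) (m₁ m₂ : ℤ) : Prop where
  le : ∀ x z, x ≠ 0 ∨ z ≠ 0 → m₁ ≤ B x z
  exists_eq : ∃ x z, B x z = m₁
  le_of_cross_ne_zero : ∀ x₁ z₁, B x₁ z₁ = m₁ → ∀ x z, x₁ * z - x * z₁ ≠ 0 → m₂ ≤ B x z
  exists_cross_ne_zero_eq : ∀ x₁ z₁, B x₁ z₁ = m₁ → ∃ x z, x₁ * z - x * z₁ ≠ 0 ∧ B x z = m₂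

theorem isSuccessiveMinima_evalForm {a b a' : ℤ} (ha : 0 < a) (hb : |b| ≤ a) (haa' : a ≤ a') :
    IsSuccessiveMinima (evalForm a b a') a a' where
  le _ _ := le_evalForm hb haa'
  exists_eq := ⟨1, 0, by simp [evalForm]⟩
  le_of_cross_ne_zero s₁ t₁ h₁ s t hcross := by
    rcases eq_or_ne t 0 with rfl | ht
    · have ht₁ : t₁ ≠ 0 := by rintro rfl; simp at hcross
      have hs : s ≠ 0 := by rintro rfl; simp at hcross
      have ha' := le_evalForm_of_right_ne_zero hb haa' (s := s₁) ht₁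
      calc a' = a := le_antisymm (h₁ ▸ ha') haa'
        _ ≤ _ := le_evalForm hb haa' (Or.inl hs)
    · exact le_evalForm_of_right_ne_zero hb haa' ht
  exists_cross_ne_zero_eq s₁ t₁ h₁ := by
    rcases eq_or_ne t₁ 0 with rfl | ht₁
    · refine ⟨0, 1, fun h => ?_, by simp [evalForm]⟩
      simp_all [evalForm]
    · have ha' := le_evalForm_of_right_ne_zero hb haa' (s := s₁) ht₁
      exact ⟨1, 0, by simpa using ht₁, by simp [evalForm]; omega⟩

theorem FormEquiv.isSuccessiveMinima {a₁ b₁ a₁' a₂ b₂ a₂' m₁ m₂ : ℤ}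
    (h : FormEquiv a₁ b₁ a₁' a₂ b₂ a₂') (hmin : IsSuccessiveMinima (evalForm a₁ b₁ a₁') m₁ m₂) :
    IsSuccessiveMinima (evalForm a₂ b₂ a₂') m₁ m₂ := by
  obtain ⟨m₁₁, m₁₂, m₂₁, m₂₂, hdet, hM⟩ := h
  have hfwd : ∀ s t, evalForm a₂ b₂ a₂' (m₁₁ * s + m₁₂ * t) (m₂₁ * s + m₂₂ * t) =
      evalForm a₁ b₁ a₁' s t := fun s t => (hM s t).symm
  have hinv : ∀ x z, evalForm a₂ b₂ a₂' x z =
      evalForm a₁ b₁ a₁' (m₂₂ * x - m₁₂ * z) (m₁₁ * z - m₂₁ * x) := by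
    intro x z
    rw [← hfwd]
    congr 1
    · linear_combination (-x) * hdet
    · linear_combination (-z) * hdet
  have hcross : ∀ x₁ z₁ x z, (m₂₂ * x₁ - m₁₂ * z₁) * (m₁₁ * z - m₂₁ * x) -
      (m₂₂ * x - m₁₂ * z) * (m₁₁ * z₁ - m₂₁ * x₁) = x₁ * z - x * z₁ := by
    intro x₁ z₁ x z
    linear_combination (x₁ * z - x * z₁) * hdet
  refine ⟨fun x z hxz => ?_, ?_, fun x₁ z₁ h₁ x z hc => ?_, fun x₁ z₁ h₁ => ?_⟩
  · rw [hinv]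
    refine hmin.le _ _ (not_and_or.1 fun ⟨hs, ht⟩ => ?_)
    have hx : x = 0 := by linear_combination m₁₁ * hs + m₁₂ * ht - x * hdet
    have hz : z = 0 := by linear_combination m₂₁ * hs + m₂₂ * ht - z * hdet
    exact hxz.elim (· hx) (· hz)
  · obtain ⟨s, t, hst⟩ := hmin.exists_eq
    exact ⟨_, _, (hfwd s t).trans hst⟩
  · rw [hinv] at h₁ ⊢
    exact hmin.le_of_cross_ne_zero _ _ h₁ _ _ (hcross x₁ z₁ x z ▸ hc)
  · rw [hinv] at h₁
    obtain ⟨s, t, hc, hst⟩ := hmin.exists_cross_ne_zero_eq _ _ h₁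
    refine ⟨m₁₁ * s + m₁₂ * t, m₂₁ * s + m₂₂ * t, ?_, (hfwd s t).trans hst⟩
    convert hc using 1
    ring

theorem four_mul_lt_of_disc {a b a' n : ℤ} (hdisc : b ^ 2 - 4 * a * a' = -(16 * n))
    (hb : |b| ≤ a) (ha : 4 < a) (haa' : a ≤ a') : 4 * a' < 4 * n + a := by
  have hb2 : b ^ 2 ≤ a ^ 2 := sq_le_sq' (abs_le.1 hb).1 (abs_le.1 hb).2
  nlinarith [mul_pos (sub_pos.2 ha) (show 0 < 4 * a' - a by linarith)]

theorem four_mul_lt_add_evalForm {a a' n A B C q r : ℤ}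
    (hmin : IsSuccessiveMinima (evalForm A B C) a a') (ha : 0 < a) (haa' : a ≤ a')
    (hlt : 4 * a' < 4 * n + a) (hq : Odd q) {x y z : ℤ} (hy : y ≠ 0) :
    4 * a' < 4 * n * y ^ 2 + evalForm A B C (2 * (x - y * r)) (q * y + 2 * z) := by
  have hn : 0 < n := by linarith
  by_cases h0 : 2 * (x - y * r) = 0 ∧ q * y + 2 * z = 0
  · have hy4 : 4 ≤ y ^ 2 := by
      obtain ⟨k, rfl⟩ : Even y :=
        (Int.even_mul.1 ⟨-z, by linarith⟩).resolve_left (Int.not_even_iff_odd.2 hq)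
      have hk : k ≠ 0 := by rintro rfl; simp at hy
      nlinarith [sq_abs k ▸ one_le_pow₀ (n := 2) (Int.one_le_abs hk)]
    rw [h0.1, h0.2]
    simp only [evalForm]
    nlinarith
  · have hB := hmin.le _ _ (not_and_or.1 h0)
    have hy1 : 1 ≤ y ^ 2 := sq_abs y ▸ one_le_pow₀ (Int.one_le_abs hy)
    nlinarith

theorem SatisfiesCond1.odd {p c q : ℕ} {hq : q.Prime} (h : SatisfiesCond1 p c q hq) : Odd q := by
  rw [Nat.odd_iff]
  rcases h with ⟨-, h8, -⟩ | ⟨-, h8, -⟩ <;> omega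

/-- `Nrd (2x - Trd x)`, the norm of the image of `x` in the Gross lattice. -/
abbrev grossNorm {α β : ℚ} (x : ℍ[ℚ, α, β]) : ℚ := 4 * Nrd x - Trd x ^ 2

theorem grossNorm_eq {α β : ℚ} (x : ℍ[ℚ, α, β]) :
    grossNorm x = -4 * α * x.imI ^ 2 - 4 * β * x.imJ ^ 2 + 4 * α * β * x.imK ^ 2 := by
  simp [grossNorm, Nrd, Trd, QuaternionAlgebra.re_mul]
  ring

theorem QuaternionAlgebra.linearIndependent_one_iff {K : Type*} [Field K] {c₁ c₂ c₃ : K}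
    {u v : ℍ[K, c₁, c₂, c₃]} (hu : u.imI = 0) (hv : v.imI = 0) :
    LinearIndependent K ![1, u, v] ↔ u.imJ * v.imK - u.imK * v.imJ ≠ 0 := by
  set M : Matrix (Fin 3) (Fin 3) K := !![1, u.re, v.re; 0, u.imJ, v.imJ; 0, u.imK, v.imK]
  have hdet : M.det = u.imJ * v.imK - u.imK * v.imJ := by
    rw [Matrix.det_fin_three]; simp [M]; ring
  have hrel : ∀ g : Fin 3 → K, ∑ i, g i • ![1, u, v] i = 0 ↔ M.mulVec g = 0 := by
    intro g
    simp only [Fin.sum_univ_three, QuaternionAlgebra.ext_iff, funext_iff, Fin.forall_fin_succ]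
    simp [M, Matrix.mulVec, dotProduct, Fin.sum_univ_three, hu, hv, mul_comm]
  rw [← hdet, Ne, ← Matrix.exists_mulVec_eq_zero_iff, Fintype.linearIndependent_iff]
  simp only [hrel, not_exists, not_and', not_not, funext_iff, Pi.zero_apply]

namespace Ocqr

/-- The element `w + x(1+j)/2 + y(i+ij)/2 + z(rj+ij)/q`. -/
def elt (p c q : ℕ) (r w x y z : ℤ) : ℍ[ℚ, -((c : ℚ) * (p : ℚ)), -(q : ℚ)] :=
  ⟨w + x / 2, y / 2, x / 2 + z * r / q, y / 2 + z / q⟩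

variable {p c q : ℕ} {r c' a a' : ℤ}

theorem mem_iff {γ : ℍ[ℚ, -((c : ℚ) * (p : ℚ)), -(q : ℚ)]} :
    γ ∈ Ocqr p c q r ↔ ∃ w x y z : ℤ, elt p c q r w x y z = γ := by
  rw [Ocqr, Submodule.mem_span_insert]
  simp only [Submodule.mem_span_triple]
  constructor
  · rintro ⟨w, _, ⟨x, y, z, rfl⟩, rfl⟩
    exact ⟨w, x, y, z, by ext <;> simp [elt, QuaternionAlgebra.mk_mul_mk] <;> ring⟩
  · rintro ⟨w, x, y, z, rfl⟩
    exact ⟨w, _, ⟨x, y, z, rfl⟩, by ext <;> simp [elt, QuaternionAlgebra.mk_mul_mk] <;> ring⟩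

theorem four_mul_grossNorm_elt (hq : q ≠ 0) (hc' : q * c' = 4 * r ^ 2 + 4 * c * p)
    (w x y z : ℤ) :
    4 * grossNorm (elt p c q r w x y z) =
      (4 * (c * p) * y ^ 2 + evalForm q (4 * r) c' (2 * (x - y * r)) (q * y + 2 * z) : ℤ) := by
  have hq' : (q : ℚ) ≠ 0 := by exact_mod_cast hq
  have hc'' : (c' : ℚ) = (4 * r ^ 2 + 4 * c * p) / q := by
    rw [eq_div_iff hq', mul_comm]; exact_mod_cast hc'
  rw [grossNorm_eq, evalForm]
  push_cast
  rw [hc'']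
  simp only [elt]
  field_simp
  ring

theorem grossNorm_elt_zero (hq : q ≠ 0) (hc' : q * c' = 4 * r ^ 2 + 4 * c * p) (w x z : ℤ) :
    grossNorm (elt p c q r w x 0 z) = evalForm q (4 * r) c' x z := by
  have := four_mul_grossNorm_elt hq hc' w x 0 z
  simp only [evalForm] at this ⊢
  push_cast at this ⊢
  linarith

theorem lt_grossNorm_elt (hq : q ≠ 0) (hc' : q * c' = 4 * r ^ 2 + 4 * c * p)
    (hmin : IsSuccessiveMinima (evalForm q (4 * r) c') a a') (ha : 0 < a) (haa' : a ≤ a')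
    (hlt : 4 * a' < 4 * (c * p) + a) (hqodd : Odd (q : ℤ)) {w x y z : ℤ} (hy : y ≠ 0) :
    (a' : ℚ) < grossNorm (elt p c q r w x y z) := by
  have h := four_mul_lt_add_evalForm (x := x) (z := z) (r := r) hmin ha haa' hlt hqodd hy
  have h' : ((4 * a' : ℤ) : ℚ) < _ := Int.cast_lt.2 h
  rw [← four_mul_grossNorm_elt hq hc'] at h'
  push_cast at h'
  linarith

theorem linearIndependent_elt_iff (hq : q ≠ 0) {w₁ x₁ z₁ w x z : ℤ} :
    LinearIndependent ℚ ![1, elt p c q r w₁ x₁ 0 z₁, elt p c q r w x 0 z] ↔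
      x₁ * z - x * z₁ ≠ 0 := by
  have hq' : (q : ℚ) ≠ 0 := by exact_mod_cast hq
  have hdet : (elt p c q r w₁ x₁ 0 z₁).imJ * (elt p c q r w x 0 z).imK -
      (elt p c q r w₁ x₁ 0 z₁).imK * (elt p c q r w x 0 z).imJ =
        ((x₁ * z - x * z₁ : ℤ) : ℚ) / (2 * q) := by
    simp only [elt]; push_cast; field_simp; ring
  rw [QuaternionAlgebra.linearIndependent_one_iff (by simp [elt]) (by simp [elt]), hdet, Ne,
    div_eq_zero_iff, Int.cast_eq_zero]
  simp [hq']

theorem le_grossNorm_of_notMem_span (hq : q ≠ 0) (hc' : q * c' = 4 * r ^ 2 + 4 * c * p)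
    (hmin : IsSuccessiveMinima (evalForm q (4 * r) c') a a') (haa' : a ≤ a')
    (hoff : ∀ w x y z : ℤ, y ≠ 0 → (a' : ℚ) < grossNorm (elt p c q r w x y z))
    {γ : ℍ[ℚ, -((c : ℚ) * (p : ℚ)), -(q : ℚ)]} (hγ : γ ∈ Ocqr p c q r)
    (hγ₀ : γ ∉ Submodule.span ℚ {1}) :
    (a : ℚ) ≤ grossNorm γ := by
  obtain ⟨w, x, y, z, rfl⟩ := mem_iff.1 hγ
  rcases eq_or_ne y 0 with rfl | hy
  · have hxz : x ≠ 0 ∨ z ≠ 0 := by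
      by_contra! h
      obtain ⟨rfl, rfl⟩ := h
      exact hγ₀ (Submodule.mem_span_singleton.2 ⟨w, by ext <;> simp [elt]⟩)
    rw [grossNorm_elt_zero hq hc']
    exact_mod_cast hmin.le x z hxz
  · exact (Int.cast_le.2 haa').trans (hoff w x y z hy).le

theorem exists_grossNorm_eq (hq : q ≠ 0) (hc' : q * c' = 4 * r ^ 2 + 4 * c * p)
    (hmin : IsSuccessiveMinima (evalForm q (4 * r) c') a a') :
    ∃ γ ∈ Ocqr p c q r, grossNorm γ = a := by
  obtain ⟨x, z, h⟩ := hmin.exists_eq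
  exact ⟨elt p c q r 0 x 0 z, mem_iff.2 ⟨_, _, _, _, rfl⟩, by rw [grossNorm_elt_zero hq hc', h]⟩

theorem exists_elt_of_grossNorm_eq (hq : q ≠ 0) (hc' : q * c' = 4 * r ^ 2 + 4 * c * p)
    (haa' : a ≤ a') (hoff : ∀ w x y z : ℤ, y ≠ 0 → (a' : ℚ) < grossNorm (elt p c q r w x y z))
    {γ : ℍ[ℚ, -((c : ℚ) * (p : ℚ)), -(q : ℚ)]} (hγ : γ ∈ Ocqr p c q r) (h : grossNorm γ = a) :
    ∃ w x z : ℤ, elt p c q r w x 0 z = γ ∧ evalForm q (4 * r) c' x z = a := by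
  obtain ⟨w, x, y, z, rfl⟩ := mem_iff.1 hγ
  obtain rfl : y = 0 := by
    by_contra hy
    exact (hoff w x y z hy).not_ge (h ▸ Int.cast_le.2 haa')
  exact ⟨w, x, z, rfl, by exact_mod_cast (grossNorm_elt_zero hq hc' w x z).symm.trans h⟩

theorem le_grossNorm_of_linearIndependent (hq : q ≠ 0)
    (hc' : q * c' = 4 * r ^ 2 + 4 * c * p)
    (hmin : IsSuccessiveMinima (evalForm q (4 * r) c') a a') (haa' : a ≤ a')
    (hoff : ∀ w x y z : ℤ, y ≠ 0 → (a' : ℚ) < grossNorm (elt p c q r w x y z))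
    {γ₁ γ : ℍ[ℚ, -((c : ℚ) * (p : ℚ)), -(q : ℚ)]} (hγ₁ : γ₁ ∈ Ocqr p c q r)
    (h₁ : grossNorm γ₁ = a) (hγ : γ ∈ Ocqr p c q r) (hli : LinearIndependent ℚ ![1, γ₁, γ]) :
    (a' : ℚ) ≤ grossNorm γ := by
  obtain ⟨w₁, x₁, z₁, rfl, hB₁⟩ := exists_elt_of_grossNorm_eq hq hc' haa' hoff hγ₁ h₁
  obtain ⟨w, x, y, z, rfl⟩ := mem_iff.1 hγ
  rcases eq_or_ne y 0 with rfl | hy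
  · rw [grossNorm_elt_zero hq hc']
    exact_mod_cast hmin.le_of_cross_ne_zero x₁ z₁ hB₁ x z ((linearIndependent_elt_iff hq).1 hli)
  · exact (hoff w x y z hy).le

theorem exists_linearIndependent_grossNorm_eq (hq : q ≠ 0)
    (hc' : q * c' = 4 * r ^ 2 + 4 * c * p)
    (hmin : IsSuccessiveMinima (evalForm q (4 * r) c') a a') (haa' : a ≤ a')
    (hoff : ∀ w x y z : ℤ, y ≠ 0 → (a' : ℚ) < grossNorm (elt p c q r w x y z))
    {γ₁ : ℍ[ℚ, -((c : ℚ) * (p : ℚ)), -(q : ℚ)]} (hγ₁ : γ₁ ∈ Ocqr p c q r)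
    (h₁ : grossNorm γ₁ = a) :
    ∃ γ ∈ Ocqr p c q r, LinearIndependent ℚ ![1, γ₁, γ] ∧ grossNorm γ = a' := by
  obtain ⟨w₁, x₁, z₁, rfl, hB₁⟩ := exists_elt_of_grossNorm_eq hq hc' haa' hoff hγ₁ h₁
  obtain ⟨x, z, hcross, h⟩ := hmin.exists_cross_ne_zero_eq x₁ z₁ hB₁
  exact ⟨elt p c q r 0 x 0 z, mem_iff.2 ⟨_, _, _, _, rfl⟩,
    (linearIndependent_elt_iff hq).2 hcross, by rw [grossNorm_elt_zero hq hc', h]⟩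

end Ocqr

theorem Ocqr_successive_minima_general (p c q : ℕ) (hq : q.Prime) (hcond : SatisfiesCond1 p c q hq)
    (r : ℤ) (hr : (q : ℤ) ∣ r ^ 2 + (c : ℤ) * (p : ℤ))
    (a b a' : ℤ) (hform : IsPosDefPrimitiveReduced a b a')
    (hdisc : b ^ 2 - 4 * a * a' = -(16 * (c : ℤ) * (p : ℤ)))
    (hequiv : FormEquiv a b a' (q : ℤ) (4 * r) ((4 * r ^ 2 + 4 * (c : ℤ) * (p : ℤ)) / q))
    (ha4 : 4 < a) :
    (∀ γ ∈ Ocqr p c q r,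
      γ ∉ Submodule.span ℚ ({1} : Set ℍ[ℚ, -((c : ℚ) * (p : ℚ)), -(q : ℚ)]) →
      (a : ℚ) ≤ 4 * Nrd γ - Trd γ ^ 2) ∧
    (∃ γ₁ ∈ Ocqr p c q r, 4 * Nrd γ₁ - Trd γ₁ ^ 2 = (a : ℚ)) ∧
    (∀ γ₁ ∈ Ocqr p c q r, 4 * Nrd γ₁ - Trd γ₁ ^ 2 = (a : ℚ) →
      (∀ γ ∈ Ocqr p c q r, LinearIndependent ℚ ![1, γ₁, γ] →
        (a' : ℚ) ≤ 4 * Nrd γ - Trd γ ^ 2) ∧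
      (∃ γ ∈ Ocqr p c q r, LinearIndependent ℚ ![1, γ₁, γ] ∧
        4 * Nrd γ - Trd γ ^ 2 = (a' : ℚ))) := by
  obtain ⟨ha, hb₁, hb₂, haa', -, -⟩ := hform
  have hb : |b| ≤ a := abs_le.2 ⟨hb₁.le, hb₂⟩
  have hq₀ : q ≠ 0 := hq.ne_zero
  have hc' : (q : ℤ) * ((4 * r ^ 2 + 4 * (c : ℤ) * (p : ℤ)) / q) = 4 * r ^ 2 + 4 * c * p :=
    Int.mul_ediv_cancel' (by obtain ⟨k, hk⟩ := hr; exact ⟨4 * k, by linear_combination 4 * hk⟩)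
  have hmin := hequiv.isSuccessiveMinima (isSuccessiveMinima_evalForm ha hb haa')
  have hlt := four_mul_lt_of_disc (n := c * p) (by rw [hdisc]; ring) hb ha4 haa'
  have hoff := fun w x y z (hy : y ≠ 0) =>
    Ocqr.lt_grossNorm_elt (w := w) (x := x) (z := z) hq₀ hc' hmin ha haa' hlt
      (by exact_mod_cast hcond.odd) hy
  exact ⟨fun γ hγ hγ₀ => Ocqr.le_grossNorm_of_notMem_span hq₀ hc' hmin haa' hoff hγ hγ₀,
    Ocqr.exists_grossNorm_eq hq₀ hc' hmin,
    fun γ₁ hγ₁ h₁ =>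
      ⟨fun γ hγ => Ocqr.le_grossNorm_of_linearIndependent hq₀ hc' hmin haa' hoff hγ₁ h₁ hγ,
        Ocqr.exists_linearIndependent_grossNorm_eq hq₀ hc' hmin haa' hoff hγ₁ h₁⟩⟩

/-- If the reduced form `(a,b,a')` equivalent to `(q, 4r, (4r²+4cp)/q)` has `a > 4`, then
`a` and `a'` are the first two successive minima of `O_c(q,r)`. -/
theorem Ocqr_successive_minima (p c q : ℕ) (hp : p.Prime) (hp3 : 3 < p) (hc : c.Prime)
    (hpc : p ≠ c) (hq : q.Prime) (hcond : SatisfiesCond1 p c q hq)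
    (r : ℤ) (hr : (q : ℤ) ∣ r ^ 2 + (c : ℤ) * (p : ℤ))
    (a b a' : ℤ) (hform : IsPosDefPrimitiveReduced a b a')
    (hdisc : b ^ 2 - 4 * a * a' = -(16 * (c : ℤ) * (p : ℤ)))
    (hequiv : FormEquiv a b a' (q : ℤ) (4 * r) ((4 * r ^ 2 + 4 * (c : ℤ) * (p : ℤ)) / q))
    (ha4 : 4 < a) :
    (∀ γ ∈ Ocqr p c q r,
      γ ∉ Submodule.span ℚ ({1} : Set ℍ[ℚ, -((c : ℚ) * (p : ℚ)), -(q : ℚ)]) →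
      (a : ℚ) ≤ 4 * Nrd γ - Trd γ ^ 2) ∧
    (∃ γ₁ ∈ Ocqr p c q r, 4 * Nrd γ₁ - Trd γ₁ ^ 2 = (a : ℚ)) ∧
    (∀ γ₁ ∈ Ocqr p c q r, 4 * Nrd γ₁ - Trd γ₁ ^ 2 = (a : ℚ) →
      (∀ γ ∈ Ocqr p c q r, LinearIndependent ℚ ![1, γ₁, γ] →
        (a' : ℚ) ≤ 4 * Nrd γ - Trd γ ^ 2) ∧
      (∃ γ ∈ Ocqr p c q r, LinearIndependent ℚ ![1, γ₁, γ] ∧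
        4 * Nrd γ - Trd γ ^ 2 = (a' : ℚ))) :=
  Ocqr_successive_minima_general p c q hq hcond r hr a b a' hform hdisc hequiv ha4
end
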